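/- arXiv:1901.04705 — 6 statements merged into one kernel-verified Lean document; each statement's English description precedes it below -/
import Mathlib

section
/- Assume the inverse Gamma function expansion: there exist constants C₀ > 0 and x₀ > 0 such that for all x ≥ x₀, |G(x) − u₀(x) − 1/2| ≤ C₀ / log(x/√(2π)), where G(x) is the unique y ≥ 2 with Γ(y) = x and u₀(x) is the unique u ≥ e with u·log u − u = log(x/√(2π)). Let α, β > 0, μ ≥ 0 with α − β(μ+1) < 0. Then for every ε > 0 there exists r₀ such that for all r ≥ r₀, S^!_{α,β,μ}(r) ≤ r^{−2(μ+1−α/β)} · exp(ε · log log r). -/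
open Filter Real

lemma two_pow_le_two_mul_factorial (k : ℕ) : 2 ^ k ≤ 2 * k.factorial := by
  induction k with
  | zero => norm_num
  | succ n ih =>
    rcases Nat.eq_zero_or_pos n with h | h
    · subst h; norm_num
    · rw [pow_succ, Nat.factorial_succ]
      have h1 : 1 ≤ n.factorial := n.factorial_pos
      nlinarith

lemma summable_fact_rpow_neg {c : ℝ} (hc : 0 < c) :
    Summable (fun k : ℕ => ((k.factorial : ℝ)) ^ (-c)) := by
  have hgs : Summable (fun k : ℕ => (2:ℝ) ^ c * ((2:ℝ) ^ (-c)) ^ k) := by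
    refine Summable.mul_left _ (summable_geometric_of_lt_one (by positivity) ?_)
    have : (2:ℝ) ^ (-c) < (2:ℝ) ^ (0:ℝ) :=
      Real.rpow_lt_rpow_of_exponent_lt (by norm_num) (by linarith)
    simpa using this
  refine Summable.of_nonneg_of_le (fun k => Real.rpow_nonneg (by positivity) _) (fun k => ?_) hgs
  have hfk : ((2:ℝ) ^ k) / 2 ≤ (k.factorial : ℝ) := by
    have h := two_pow_le_two_mul_factorial k
    have h' : ((2:ℝ)) ^ k ≤ 2 * (k.factorial : ℝ) := by exact_mod_cast h
    linarith
  have h1 : (0:ℝ) < (2:ℝ) ^ k / 2 := by positivity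
  have h2 : ((k.factorial : ℝ)) ^ (-c) ≤ ((2:ℝ) ^ k / 2) ^ (-c) :=
    Real.rpow_le_rpow_of_nonpos h1 hfk (by linarith)
  refine h2.trans (le_of_eq ?_)
  rw [Real.div_rpow (by positivity) (by norm_num), ← Real.rpow_natCast (2:ℝ) k,
    ← Real.rpow_mul (by norm_num), mul_comm (k:ℝ) (-c), Real.rpow_mul (by norm_num),
    Real.rpow_natCast, Real.rpow_neg (by norm_num : (0:ℝ) ≤ 2) c,
    div_eq_mul_inv, inv_inv, mul_comm]

/-- Theorem 1.4: asymptotic upper bound for the factorial Mathieu-type series,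
conditional on the asymptotic expansion of the inverse Gamma function. -/
theorem mathieu_factorial_upper_bound
    (α β μ : ℝ) (hα : 0 < α) (hβ : 0 < β) (hμ : 0 ≤ μ)
    (hconv : α - β * (μ + 1) < 0)
    (G u₀ : ℝ → ℝ)
    (hG : ∀ᶠ x in Filter.atTop, 2 ≤ G x ∧ Real.Gamma (G x) = x)
    (hu₀ : ∀ᶠ x in Filter.atTop, Real.exp 1 ≤ u₀ x ∧
      u₀ x * Real.log (u₀ x) - u₀ x = Real.log (x / Real.sqrt (2 * Real.pi)))
    (hinv : ∃ C₀ > (0 : ℝ), ∃ x₀ > (0 : ℝ), ∀ x ≥ x₀,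
      |G x - u₀ x - 1 / 2| ≤ C₀ / Real.log (x / Real.sqrt (2 * Real.pi))) :
    ∀ ε > (0 : ℝ), ∃ r₀ : ℝ, ∀ r ≥ r₀,
      (∑' n : ℕ,
        ((n.factorial : ℝ)) ^ α / (((n.factorial : ℝ)) ^ β + r ^ 2) ^ (μ + 1))
      ≤ r ^ (-(2 * (μ + 1 - α / β))) * Real.exp (ε * Real.log (Real.log r)) := by
  classical
  intro ε hε
  set γ : ℝ := β * (μ + 1) - α with hγdef
  have hγ : 0 < γ := by simp only [hγdef]; linarith
  set K₁ : ℝ := ∑' k : ℕ, ((k.factorial : ℝ)) ^ (-α) with hK₁def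
  set K₂ : ℝ := ∑' k : ℕ, ((k.factorial : ℝ)) ^ (-γ) with hK₂def
  have hs₁ := summable_fact_rpow_neg hα
  have hs₂ := summable_fact_rpow_neg hγ
  have hK₁1 : 1 ≤ K₁ := by
    have h := Summable.le_tsum hs₁ 0 (fun j _ => Real.rpow_nonneg (by positivity) _)
    simpa using h
  have hK₂1 : 1 ≤ K₂ := by
    have h := Summable.le_tsum hs₂ 0 (fun j _ => Real.rpow_nonneg (by positivity) _)
    simpa using h
  set C : ℝ := K₁ + K₂ with hCdef
  have hC2 : 2 ≤ C := by linarith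
  have hC0 : 0 < C := by linarith
  have hlogC : 0 < Real.log C := Real.log_pos (by linarith)
  refine ⟨Real.exp (Real.exp (Real.log C / ε)), fun r hr => ?_⟩
  -- basic facts about r
  have hr1 : (1:ℝ) < r := by
    have h2 : Real.exp 0 < Real.exp (Real.exp (Real.log C / ε)) :=
      Real.exp_lt_exp.2 (Real.exp_pos _)
    rw [Real.exp_zero] at h2
    linarith [hr]
  have hrpos : 0 < r := by linarith
  -- absorb the constant C
  have hCexp : C ≤ Real.exp (ε * Real.log (Real.log r)) := by
    have hlr : Real.exp (Real.log C / ε) ≤ Real.log r :=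
      (Real.le_log_iff_exp_le hrpos).2 (by simpa using hr)
    have hlrpos : 0 < Real.log r := lt_of_lt_of_le (Real.exp_pos _) hlr
    have hllr : Real.log C / ε ≤ Real.log (Real.log r) :=
      (Real.le_log_iff_exp_le hlrpos).2 hlr
    have : Real.log C ≤ ε * Real.log (Real.log r) := by
      rw [div_le_iff₀ hε] at hllr; linarith [hllr]
    calc C = Real.exp (Real.log C) := (Real.exp_log hC0).symm
    _ ≤ _ := Real.exp_le_exp.2 this
  -- set up t and N
  set t : ℝ := r ^ ((2:ℝ)/β) with htdef
  have ht1 : (1:ℝ) ≤ t := Real.one_le_rpow hr1.le (by positivity)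
  have htpos : 0 < t := by linarith
  set P : ℕ → Prop := fun n => ((n.factorial : ℝ)) ≤ t with hPdef
  set N : ℕ := Nat.findGreatest P ⌈t⌉₊ with hNdef
  have hN1 : ((N.factorial : ℝ)) ≤ t := by
    have h0 : P 0 := by simp only [hPdef, Nat.factorial_zero, Nat.cast_one]; exact ht1
    exact Nat.findGreatest_spec (P := P) (m := 0) (n := ⌈t⌉₊) (Nat.zero_le _) h0
  have hN2 : t < (((N+1).factorial : ℝ)) := by
    by_contra hcon
    push_neg at hcon
    have hle : (N+1 : ℝ) ≤ t := le_trans (by exact_mod_cast Nat.self_le_factorial (N+1)) hcon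
    have hle2 : N + 1 ≤ ⌈t⌉₊ := by
      have := hle.trans (Nat.le_ceil t)
      exact_mod_cast this
    exact Nat.findGreatest_is_greatest (Nat.lt_succ_self N) hle2 hcon
  -- the terms
  set f : ℕ → ℝ := fun n =>
    ((n.factorial : ℝ)) ^ α / (((n.factorial : ℝ)) ^ β + r ^ 2) ^ (μ + 1) with hfdef
  have hfactpos : ∀ n : ℕ, (0:ℝ) < (n.factorial : ℝ) := fun n => by
    exact_mod_cast n.factorial_pos
  have hDpos : ∀ n : ℕ, (0:ℝ) < (((n.factorial : ℝ)) ^ β + r ^ 2) ^ (μ + 1) := fun n => by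
    have := hfactpos n
    positivity
  have hf_nonneg : ∀ n, 0 ≤ f n := fun n => by
    have h1 := hfactpos n; have h2 := hDpos n
    exact div_nonneg (Real.rpow_nonneg h1.le _) h2.le
  -- bound B : f n ≤ (n!)^(-γ)
  have hB : ∀ n : ℕ, f n ≤ ((n.factorial : ℝ)) ^ (-γ) := by
    intro n
    have hfn := hfactpos n
    have hden : ((n.factorial : ℝ)) ^ (β * (μ+1)) ≤ (((n.factorial : ℝ)) ^ β + r ^ 2) ^ (μ + 1) := by
      rw [Real.rpow_mul hfn.le]
      exact Real.rpow_le_rpow (Real.rpow_nonneg hfn.le _) (by nlinarith [sq_nonneg r]) (by linarith)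
    have hdpos : (0:ℝ) < ((n.factorial : ℝ)) ^ (β * (μ+1)) := Real.rpow_pos_of_pos hfn _
    calc f n ≤ ((n.factorial : ℝ)) ^ α / ((n.factorial : ℝ)) ^ (β * (μ+1)) :=
          div_le_div_of_nonneg_left (Real.rpow_nonneg hfn.le _) hdpos hden
    _ = ((n.factorial : ℝ)) ^ (-γ) := by
        rw [← Real.rpow_sub hfn]; congr 1; simp only [hγdef]; ring
  -- bound A : f n ≤ (n!)^α * (r^2)^(-(μ+1))
  have hA : ∀ n : ℕ, f n ≤ ((n.factorial : ℝ)) ^ α * ((r:ℝ) ^ 2) ^ (-(μ+1) : ℝ) := by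
    intro n
    have hfn := hfactpos n
    have hr2 : (0:ℝ) < r ^ 2 := by positivity
    have hden : ((r:ℝ) ^ 2) ^ ((μ+1) : ℝ) ≤ (((n.factorial : ℝ)) ^ β + r ^ 2) ^ (μ + 1) :=
      Real.rpow_le_rpow hr2.le (by nlinarith [Real.rpow_pos_of_pos hfn β]) (by linarith)
    have hdpos : (0:ℝ) < ((r:ℝ) ^ 2) ^ ((μ+1) : ℝ) := Real.rpow_pos_of_pos hr2 _
    calc f n ≤ ((n.factorial : ℝ)) ^ α / ((r:ℝ) ^ 2) ^ ((μ+1) : ℝ) :=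
          div_le_div_of_nonneg_left (Real.rpow_nonneg hfn.le _) hdpos hden
    _ = _ := by rw [Real.rpow_neg hr2.le, div_eq_mul_inv]
  have hsumf : Summable f := Summable.of_nonneg_of_le hf_nonneg hB hs₂
  -- the split
  have hsplit := Summable.sum_add_tsum_nat_add (f := f) (N+1) hsumf
  -- Part 1
  have hpart1 : ∑ i ∈ Finset.range (N+1), f i ≤ K₁ * (t ^ α * ((r:ℝ)^2) ^ (-(μ+1):ℝ)) := by
    have step1 : ∑ i ∈ Finset.range (N+1), f i ≤
        ∑ i ∈ Finset.range (N+1), ((i.factorial : ℝ)) ^ α * ((r:ℝ)^2) ^ (-(μ+1):ℝ) :=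
      Finset.sum_le_sum (fun i _ => hA i)
    have step2 : ∀ i ∈ Finset.range (N+1),
        ((i.factorial : ℝ)) ^ α ≤ ((N.factorial : ℝ)) ^ α * (((N-i).factorial : ℝ)) ^ (-α) := by
      intro i hi
      have hiN : i ≤ N := Nat.lt_succ_iff.1 (Finset.mem_range.1 hi)
      have hdvd := Nat.factorial_mul_factorial_dvd_factorial hiN
      have hle : (i.factorial : ℝ) * ((N-i).factorial : ℝ) ≤ (N.factorial : ℝ) := by
        exact_mod_cast Nat.le_of_dvd N.factorial_pos hdvd
      have hNi := hfactpos (N - i)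
      have hi' := hfactpos i
      have key : (i.factorial : ℝ) ≤ (N.factorial : ℝ) / ((N-i).factorial : ℝ) :=
        (le_div_iff₀ hNi).2 hle
      calc ((i.factorial : ℝ)) ^ α ≤ ((N.factorial : ℝ) / ((N-i).factorial : ℝ)) ^ α :=
            Real.rpow_le_rpow hi'.le key hα.le
      _ = ((N.factorial : ℝ)) ^ α * (((N-i).factorial : ℝ)) ^ (-α) := by
            rw [Real.div_rpow (hfactpos N).le hNi.le, Real.rpow_neg hNi.le, div_eq_mul_inv]
    have step3 : ∑ i ∈ Finset.range (N+1), ((i.factorial : ℝ)) ^ α ≤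
        ((N.factorial : ℝ)) ^ α * K₁ := by
      calc ∑ i ∈ Finset.range (N+1), ((i.factorial : ℝ)) ^ α
          ≤ ∑ i ∈ Finset.range (N+1), ((N.factorial : ℝ)) ^ α * (((N-i).factorial : ℝ)) ^ (-α) :=
            Finset.sum_le_sum step2
      _ = ((N.factorial : ℝ)) ^ α * ∑ i ∈ Finset.range (N+1), (((N-i).factorial : ℝ)) ^ (-α) := by
            rw [Finset.mul_sum]
      _ = ((N.factorial : ℝ)) ^ α * ∑ k ∈ Finset.range (N+1), ((k.factorial : ℝ)) ^ (-α) := by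
            congr 1
            have := Finset.sum_range_reflect (fun k : ℕ => ((k.factorial : ℝ)) ^ (-α)) (N+1)
            exact (Finset.sum_range_reflect (fun k : ℕ => ((k.factorial : ℝ)) ^ (-α)) (N+1)).symm ▸ rfl
      _ ≤ ((N.factorial : ℝ)) ^ α * K₁ := by
            refine mul_le_mul_of_nonneg_left ?_ (Real.rpow_nonneg (hfactpos N).le _)
            exact Summable.sum_le_tsum _ (fun j _ => Real.rpow_nonneg (hfactpos j).le _) hs₁
    calc ∑ i ∈ Finset.range (N+1), f i
        ≤ (∑ i ∈ Finset.range (N+1), ((i.factorial : ℝ)) ^ α) * ((r:ℝ)^2) ^ (-(μ+1):ℝ) := by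
          rw [Finset.sum_mul]; exact step1
    _ ≤ (((N.factorial : ℝ)) ^ α * K₁) * ((r:ℝ)^2) ^ (-(μ+1):ℝ) :=
          mul_le_mul_of_nonneg_right step3 (Real.rpow_nonneg (by positivity) _)
    _ ≤ (t ^ α * K₁) * ((r:ℝ)^2) ^ (-(μ+1):ℝ) := by
          refine mul_le_mul_of_nonneg_right
            (mul_le_mul_of_nonneg_right
              (Real.rpow_le_rpow (hfactpos N).le hN1 hα.le) (by linarith))
            (Real.rpow_nonneg (by positivity) _)
    _ = K₁ * (t ^ α * ((r:ℝ)^2) ^ (-(μ+1):ℝ)) := by ring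
  -- Part 2
  have hpart2 : ∑' i : ℕ, f (i + (N+1)) ≤ K₂ * t ^ (-γ) := by
    have hsum' : Summable (fun i : ℕ => f (i + (N+1))) := (summable_nat_add_iff (N+1)).2 hsumf
    have hg : Summable (fun i : ℕ => (((N+1).factorial : ℝ)) ^ (-γ) * ((i.factorial : ℝ)) ^ (-γ)) :=
      hs₂.mul_left _
    have hbound : ∀ i : ℕ, f (i + (N+1)) ≤
        (((N+1).factorial : ℝ)) ^ (-γ) * ((i.factorial : ℝ)) ^ (-γ) := by
      intro i
      refine (hB _).trans ?_
      have hdvd := Nat.factorial_mul_factorial_dvd_factorial_add (N+1) i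
      have hle : ((N+1).factorial : ℝ) * (i.factorial : ℝ) ≤ (((N+1)+i).factorial : ℝ) := by
        exact_mod_cast Nat.le_of_dvd ((N+1+i).factorial_pos) hdvd
      have hp1 := hfactpos (N+1); have hp2 := hfactpos i
      have heq : ((i + (N+1)).factorial : ℝ) = (((N+1)+i).factorial : ℝ) := by
        rw [Nat.add_comm]
      rw [heq]
      calc (((N+1)+i).factorial : ℝ) ^ (-γ)
          ≤ (((N+1).factorial : ℝ) * (i.factorial : ℝ)) ^ (-γ) :=
            Real.rpow_le_rpow_of_nonpos (by positivity) hle (by linarith)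
      _ = _ := Real.mul_rpow hp1.le hp2.le
    calc ∑' i : ℕ, f (i + (N+1))
        ≤ ∑' i : ℕ, (((N+1).factorial : ℝ)) ^ (-γ) * ((i.factorial : ℝ)) ^ (-γ) :=
          Summable.tsum_le_tsum hbound hsum' hg
    _ = (((N+1).factorial : ℝ)) ^ (-γ) * K₂ := Summable.tsum_mul_left _ hs₂
    _ ≤ t ^ (-γ) * K₂ := by
          refine mul_le_mul_of_nonneg_right
            (Real.rpow_le_rpow_of_nonpos htpos hN2.le (by linarith)) (by linarith)
    _ = K₂ * t ^ (-γ) := by ring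
  -- exponent arithmetic
  have hexp1 : t ^ α * ((r:ℝ)^2) ^ (-(μ+1):ℝ) = r ^ (-(2 * (μ + 1 - α / β))) := by
    rw [htdef, ← Real.rpow_natCast r 2, ← Real.rpow_mul hrpos.le, ← Real.rpow_mul hrpos.le,
      ← Real.rpow_add hrpos]
    congr 1
    push_cast
    field_simp
    ring
  have hexp2 : t ^ (-γ) = r ^ (-(2 * (μ + 1 - α / β))) := by
    rw [htdef, ← Real.rpow_mul hrpos.le]
    congr 1
    rw [hγdef]
    field_simp
  -- conclude
  have hfinal : (∑' n : ℕ, f n) ≤ C * r ^ (-(2 * (μ + 1 - α / β))) := by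
    rw [← hsplit]
    calc ∑ i ∈ Finset.range (N+1), f i + ∑' i : ℕ, f (i + (N+1))
        ≤ K₁ * (t ^ α * ((r:ℝ)^2) ^ (-(μ+1):ℝ)) + K₂ * t ^ (-γ) := add_le_add hpart1 hpart2
    _ = C * r ^ (-(2 * (μ + 1 - α / β))) := by rw [hexp1, hexp2, hCdef]; ring
  calc (∑' n : ℕ, f n) ≤ C * r ^ (-(2 * (μ + 1 - α / β))) := hfinal
  _ ≤ Real.exp (ε * Real.log (Real.log r)) * r ^ (-(2 * (μ + 1 - α / β))) :=
      mul_le_mul_of_nonneg_right hCexp (Real.rpow_nonneg hrpos.le _)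
  _ = _ := by ring
end

section
/- Let α, μ ≥ 0 and β > 0 with α − β(μ+1) < 0. Then there exist constants C > 0 and r₀ > e such that for all r ≥ r₀, S^!_{α,β,μ}(r) ≤ C · r^{−2(μ+1−α/β)} · (log r) / (log log r). -/
open Filter Real

private lemma log_le_half_of_16le {v : ℝ} (hv : 16 ≤ v) : Real.log v ≤ v / 2 := by
  have hv0 : (0:ℝ) < v := by linarith
  have h1 : Real.log v / 2 = Real.log (Real.sqrt v) := (Real.log_sqrt hv0.le).symm
  have h2 : Real.log (Real.sqrt v) ≤ Real.sqrt v - 1 :=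
    Real.log_le_sub_one_of_pos (Real.sqrt_pos.mpr hv0)
  have h3 : Real.sqrt v ≤ v / 4 := by
    rw [show v / 4 = Real.sqrt ((v/4)^2) from (Real.sqrt_sq (by positivity)).symm]
    exact Real.sqrt_le_sqrt (by nlinarith)
  linarith

set_option maxHeartbeats 1000000 in
/-- Theorem 1.5: unconditional saddle-point bound for the factorial
Mathieu-type series. -/
theorem mathieu_factorial_saddle_point_bound
    (α β μ : ℝ) (hα : 0 ≤ α) (hβ : 0 < β) (hμ : 0 ≤ μ)
    (hconv : α - β * (μ + 1) < 0) :
    ∃ C > (0 : ℝ), ∃ r₀ > Real.exp 1, ∀ r ≥ r₀,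
      (∑' n : ℕ,
        ((n.factorial : ℝ)) ^ α / (((n.factorial : ℝ)) ^ β + r ^ 2) ^ (μ + 1))
      ≤ C * r ^ (-(2 * (μ + 1 - α / β))) * Real.log r / Real.log (Real.log r) := by
  set δ : ℝ := β * (μ + 1) - α with hδdef
  have hδ : 0 < δ := by rw [hδdef]; linarith
  set q : ℝ := (2:ℝ) ^ (-δ) with hqdef
  have hq0 : 0 < q := Real.rpow_pos_of_pos two_pos _
  have hq1 : q < 1 := Real.rpow_lt_one_of_one_lt_of_neg one_lt_two (by linarith)
  set K : ℝ := (1 - q)⁻¹ with hKdef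
  have hK0 : 0 < K := by rw [hKdef]; exact inv_pos.mpr (by linarith)
  set c : ℝ := 16 / β + 4 with hcdef
  have hc4 : 4 ≤ c := by
    have : 0 < 16 / β := by positivity
    rw [hcdef]; linarith
  refine ⟨c + 1 + K, by linarith, Real.exp (Real.exp 16), ?_, ?_⟩
  · refine Real.exp_lt_exp.mpr ?_
    linarith [Real.add_one_le_exp (16:ℝ)]
  intro r hr
  have hr1 : 1 < r := by
    have h : (1:ℝ) < Real.exp (Real.exp 16) := by
      rw [show (1:ℝ) = Real.exp 0 from (Real.exp_zero).symm]
      exact Real.exp_lt_exp.mpr (Real.exp_pos 16)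
    linarith
  have hr0 : 0 < r := by linarith
  set u := Real.log r with hudef
  set v := Real.log u with hvdef
  have hu : Real.exp 16 ≤ u := by
    rw [hudef, ← Real.log_exp (Real.exp 16)]
    exact Real.log_le_log (Real.exp_pos _) hr
  have hu0 : 0 < u := lt_of_lt_of_le (Real.exp_pos _) hu
  have hv16 : 16 ≤ v := by
    rw [hvdef, ← Real.log_exp (16:ℝ)]
    exact Real.log_le_log (Real.exp_pos _) hu
  have hv0 : 0 < v := by linarith
  have hvu : v ≤ u := le_trans (Real.log_le_sub_one_of_pos hu0) (by linarith)
  have huv1 : 1 ≤ u / v := (one_le_div hv0).mpr hvu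
  -- the saddle scale
  set t : ℝ := r ^ ((2:ℝ)/β) with htdef
  have ht0 : 0 < t := Real.rpow_pos_of_pos hr0 _
  have ht1 : 1 ≤ t := Real.one_le_rpow hr1.le (by positivity)
  have hlogt : Real.log t = 2/β * u := Real.log_rpow hr0 _
  -- the cut index N
  have hex : ∃ n : ℕ, t < (n.factorial : ℝ) := by
    obtain ⟨n, hn⟩ := exists_nat_gt t
    exact ⟨n, lt_of_lt_of_le hn (by exact_mod_cast Nat.self_le_factorial n)⟩
  set N := Nat.find hex with hNdef
  have hNt : t < (N.factorial : ℝ) := Nat.find_spec hex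
  have hNlt : ∀ m, m < N → ((m.factorial : ℝ)) ≤ t := fun m hm =>
    not_lt.mp (Nat.find_min hex hm)
  have hN1 : 1 ≤ N := by
    rcases Nat.eq_zero_or_pos N with h | h
    · exfalso; rw [h] at hNt; simp [Nat.factorial] at hNt; linarith
    · exact h
  set f : ℕ → ℝ := fun n =>
    ((n.factorial : ℝ)) ^ α / (((n.factorial : ℝ)) ^ β + r ^ 2) ^ (μ + 1) with hfdef
  have hfac1 : ∀ n : ℕ, (1:ℝ) ≤ (n.factorial : ℝ) := by
    intro n; exact_mod_cast Nat.one_le_iff_ne_zero.mpr n.factorial_ne_zero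
  have hfnonneg : ∀ n, 0 ≤ f n := by
    intro n; rw [hfdef]; positivity
  -- generic decay bound
  have hB : ∀ n : ℕ, f n ≤ ((n.factorial : ℝ)) ^ (-δ) := by
    intro n
    have h0 : (0:ℝ) < (n.factorial : ℝ) := lt_of_lt_of_le one_pos (hfac1 n)
    have step : f n ≤ ((n.factorial : ℝ)) ^ α / (((n.factorial : ℝ)) ^ β) ^ (μ + 1) := by
      simp only [hfdef]
      refine div_le_div₀ (by positivity) le_rfl
        (Real.rpow_pos_of_pos (Real.rpow_pos_of_pos h0 β) _) ?_
      exact Real.rpow_le_rpow (by positivity) (by linarith [sq_nonneg r]) (by linarith)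
    refine le_trans step (le_of_eq ?_)
    rw [← Real.rpow_mul h0.le, ← Real.rpow_sub h0]
    congr 1
    rw [hδdef]; ring
  -- bound below the cut
  set X : ℝ := r ^ (-(2 * (μ + 1 - α / β))) with hXdef
  have hX0 : 0 < X := Real.rpow_pos_of_pos hr0 _
  have hr2 : (r:ℝ) ^ (2:ℕ) = r ^ ((2:ℕ):ℝ) := (Real.rpow_natCast r 2).symm
  have hA : ∀ m, m < N → f m ≤ X := by
    intro m hm
    have h0 : (0:ℝ) < (m.factorial : ℝ) := lt_of_lt_of_le one_pos (hfac1 m)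
    have step : f m ≤ t ^ α / (r ^ ((2:ℕ):ℝ)) ^ (μ + 1) := by
      simp only [hfdef]
      refine div_le_div₀ (by positivity)
        (Real.rpow_le_rpow h0.le (hNlt m hm) hα)
        (Real.rpow_pos_of_pos (Real.rpow_pos_of_pos hr0 _) _) ?_
      exact Real.rpow_le_rpow (by positivity)
        (by rw [← hr2]; linarith [Real.rpow_nonneg h0.le β]) (by linarith)
    refine le_trans step (le_of_eq ?_)
    rw [htdef, ← Real.rpow_mul hr0.le, ← Real.rpow_mul hr0.le, ← Real.rpow_sub hr0, hXdef]
    congr 1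
    push_cast
    field_simp
    ring
  -- tail bound
  have hXt : t ^ (-δ) = X := by
    rw [htdef, ← Real.rpow_mul hr0.le, hXdef]
    congr 1
    rw [hδdef]
    field_simp
  have htail : ∀ n : ℕ, f (n + N) ≤ X * q ^ n := by
    intro n
    have hfact : (N.factorial * 2 ^ n : ℕ) ≤ (n + N).factorial := by
      calc N.factorial * 2 ^ n ≤ N.factorial * (N + 1) ^ n :=
            Nat.mul_le_mul_left _ (Nat.pow_le_pow_left (by omega) n)
        _ ≤ (N + n).factorial := Nat.factorial_mul_pow_le_factorial
        _ = (n + N).factorial := by rw [Nat.add_comm]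
    have h1 : f (n + N) ≤ (((n + N).factorial : ℝ)) ^ (-δ) := hB _
    have h2 : (((n + N).factorial : ℝ)) ^ (-δ) ≤ ((N.factorial * 2 ^ n : ℕ) : ℝ) ^ (-δ) := by
      refine Real.rpow_le_rpow_of_nonpos ?_ (by exact_mod_cast hfact) (by linarith)
      positivity
    have h3 : ((N.factorial * 2 ^ n : ℕ) : ℝ) ^ (-δ) = (N.factorial : ℝ) ^ (-δ) * q ^ n := by
      push_cast
      rw [Real.mul_rpow (by positivity) (by positivity)]
      congr 1
      rw [hqdef, ← Real.rpow_natCast (2:ℝ) n, ← Real.rpow_mul (by norm_num), mul_comm,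
        Real.rpow_mul (by norm_num), Real.rpow_natCast]
    have h4 : (N.factorial : ℝ) ^ (-δ) ≤ t ^ (-δ) :=
      Real.rpow_le_rpow_of_nonpos ht0 hNt.le (by linarith)
    calc f (n + N) ≤ (N.factorial : ℝ) ^ (-δ) * q ^ n := by rw [← h3]; exact le_trans h1 h2
      _ ≤ t ^ (-δ) * q ^ n := mul_le_mul_of_nonneg_right h4 (pow_nonneg hq0.le n)
      _ = X * q ^ n := by rw [hXt]
  -- summability
  have hg : Summable (fun n : ℕ => X * q ^ n) :=
    (summable_geometric_of_lt_one hq0.le hq1).mul_left _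
  have hfs : Summable (fun n : ℕ => f (n + N)) :=
    Summable.of_nonneg_of_le (fun n => hfnonneg _) htail hg
  have hf : Summable f := (summable_nat_add_iff N).mp hfs
  have hsplit := Summable.sum_add_tsum_nat_add N hf
  have hS1 : ∑ i ∈ Finset.range N, f i ≤ (N : ℝ) * X := by
    have := Finset.sum_le_card_nsmul (Finset.range N) f X (fun i hi => hA i (Finset.mem_range.mp hi))
    simpa [Finset.card_range, nsmul_eq_mul] using this
  have hS2 : (∑' n : ℕ, f (n + N)) ≤ X * K := by
    calc (∑' n : ℕ, f (n + N)) ≤ ∑' n : ℕ, X * q ^ n := Summable.tsum_le_tsum htail hfs hg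
      _ = X * K := by rw [tsum_mul_left, tsum_geometric_of_lt_one hq0.le hq1, hKdef]
  have hsum : (∑' n : ℕ, f n) ≤ (N : ℝ) * X + X * K := by
    rw [← hsplit]; exact add_le_add hS1 hS2
  -- bound on N
  set M := ⌈c * (u / v)⌉₊ with hMdef
  have hMl : c * (u / v) ≤ (M : ℝ) := Nat.le_ceil _
  have hMu : (M : ℝ) ≤ c * (u / v) + 1 := (Nat.ceil_lt_add_one (by positivity)).le
  set k := M / 2 with hkdef
  have hk2 : (M : ℝ) ≤ 2 * (k : ℝ) + 1 := by
    have : M ≤ 2 * k + 1 := by omega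
    exact_mod_cast this
  have hprod : (4:ℝ) * 1 ≤ c * (u / v) :=
    mul_le_mul hc4 huv1 (by norm_num) (by linarith)
  have hkuv : c * (u / v) ≤ 4 * (k : ℝ) := by linarith
  have hk_uv : u / v ≤ (k : ℝ) := by
    have h9 := mul_le_mul hc4 (le_refl (u/v)) (by positivity) (by linarith)
    linarith
  have hk1 : (1:ℝ) ≤ (k:ℝ) := le_trans huv1 hk_uv
  have hlogk : v / 2 ≤ Real.log (k : ℝ) := by
    have h1 : Real.log (u / v) ≤ Real.log (k : ℝ) := Real.log_le_log (by positivity) hk_uv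
    have h2 : Real.log (u / v) = v - Real.log v := by
      rw [Real.log_div (by positivity) (by positivity), hvdef]
    have h3 := log_le_half_of_16le hv16
    linarith
  have hkM : k ≤ M - k := by omega
  have hfactM : (k ^ (M - k) : ℕ) ≤ M.factorial := by
    calc (k ^ (M - k) : ℕ) ≤ k.factorial * k ^ (M - k) :=
          Nat.le_mul_of_pos_left _ k.factorial_pos
      _ ≤ M.factorial := Nat.factorial_mul_pow_sub_le_factorial (Nat.div_le_self M 2)
  have hPM : t < (M.factorial : ℝ) := by
    rw [← Real.log_lt_log_iff ht0 (by exact_mod_cast M.factorial_pos)]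
    have hlogpow : ((M - k : ℕ) : ℝ) * Real.log (k : ℝ) ≤ Real.log (M.factorial : ℝ) := by
      have hle : ((k:ℝ)) ^ (M - k : ℕ) ≤ (M.factorial : ℝ) := by exact_mod_cast hfactM
      have := Real.log_le_log (by positivity) hle
      rwa [Real.log_pow] at this
    have hkk : ((k:ℝ)) * Real.log (k:ℝ) ≤ ((M - k : ℕ) : ℝ) * Real.log (k : ℝ) := by
      have hcast : (k : ℝ) ≤ ((M - k : ℕ) : ℝ) := by exact_mod_cast hkM
      have hlk0 : 0 ≤ Real.log (k:ℝ) := by linarith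
      exact mul_le_mul_of_nonneg_right hcast hlk0
    have hmain : 2/β * u < ((k:ℝ)) * Real.log (k:ℝ) := by
      have h5 : c * (u / v) * (v / 8) = c * u / 8 := by field_simp
      have h6 := mul_le_mul_of_nonneg_right hkuv (by linarith : (0:ℝ) ≤ v / 8)
      have h7 := mul_le_mul_of_nonneg_left hlogk (by positivity : (0:ℝ) ≤ (k:ℝ))
      have h8 : c * u / 8 = 2/β * u + u/2 := by rw [hcdef]; field_simp; ring
      have h9 : 4 * (k:ℝ) * (v / 8) = (k:ℝ) * (v / 2) := by ring
      linarith
    rw [hlogt]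
    linarith
  have hNM : N ≤ M := Nat.find_le hPM
  have hNreal : (N : ℝ) ≤ (c + 1) * (u / v) := by
    have h1 : (N : ℝ) ≤ (M : ℝ) := by exact_mod_cast hNM
    have h2 : (c + 1) * (u / v) = c * (u/v) + u/v := by ring
    linarith
  -- conclude
  have hfinal : (N : ℝ) * X + X * K ≤ (c + 1 + K) * X * u / v := by
    have h1 : (c + 1 + K) * X * u / v = ((c + 1) * (u/v)) * X + (K * (u/v)) * X := by
      field_simp
    rw [h1]
    have h2 : X * K ≤ (K * (u/v)) * X := by
      have := mul_le_mul_of_nonneg_right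
        (mul_le_mul_of_nonneg_left huv1 hK0.le) hX0.le
      linarith
    have h3 : (N:ℝ) * X ≤ ((c + 1) * (u/v)) * X :=
      mul_le_mul_of_nonneg_right hNreal hX0.le
    linarith
  calc (∑' n : ℕ, f n) ≤ (N : ℝ) * X + X * K := hsum
    _ ≤ (c + 1 + K) * X * u / v := hfinal
end

section
/- Let α, β > 0, μ ≥ 0 with α − β(μ+1) < −1, and γ, δ ∈ ℝ, and set ŝ := −2(α+1)/β + 2(μ+1) > 0. For every complex s with 0 < Re(s) < ŝ, the Mellin transform of S_{α,β,γ,δ,μ} satisfies ∫_0^∞ S_{α,β,γ,δ,μ}(r)·r^{s−1} dr = D(s)·Γ(μ+1−s/2)·Γ(s/2) / (2·Γ(μ+1)), where D(s) := Σ_{n=2}^∞ (log n)^{δs/2 + γ − δ(μ+1)} · n^{βs/2 + α − β(μ+1)} (the series defining D(s) converging absolutely for Re(s) < ŝ). -/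
/-!
Write `S(r) = ∑ₙ Aₙ / (cₙ + r²)^a` with `Aₙ = n^α (log n)^γ`, `cₙ = n^β (log n)^δ`, `a = μ + 1`.
The substitutions `r ↦ r²` and `x ↦ x / c` reduce the Mellin transform of one summand to
`∫₀^∞ y^(u-1) (1+y)^(-a) dy`, and `t = y/(1+y)` turns this into the Beta integral
`B(u, a-u) = Γ(u) Γ(a-u) / Γ(a)`. Hence the `n`-th summand contributes
`Aₙ cₙ^(s/2-a) Γ(s/2) Γ(a-s/2) / (2 Γ(a))`, and `Aₙ cₙ^(s/2-a)` is the `n`-th term of `D(s)`.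
The absolute integrals of the summands are the moduli of these expressions at `Re s`, of size
`n^(β Re s/2 + α - βa) (log n)^(…)`; the exponent of `n` is below `-1` exactly when `Re s < ŝ`,
so they are summable and sum and integral may be exchanged.
-/

open Filter Complex MeasureTheory Set

theorem hasDerivAt_div_one_add {y : ℝ} (hy : 1 + y ≠ 0) :
    HasDerivAt (fun y : ℝ => y / (1 + y)) ((1 + y) ^ 2)⁻¹ y := by
  have h := (hasDerivAt_id' y).fun_div ((hasDerivAt_id' y).const_add 1) hy
  rwa [show (1 * (1 + y) - y * 1) / (1 + y) ^ 2 = ((1 + y) ^ 2)⁻¹ by ring] at h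

theorem hasDerivWithinAt_div_one_add_Ioi :
    ∀ y ∈ Ioi (0 : ℝ), HasDerivWithinAt (fun y : ℝ => y / (1 + y)) ((1 + y) ^ 2)⁻¹ (Ioi 0) y :=
  fun y (hy : 0 < y) => (hasDerivAt_div_one_add (by linarith)).hasDerivWithinAt

theorem injOn_div_one_add : InjOn (fun y : ℝ => y / (1 + y)) (Ioi 0) := by
  intro y (hy : 0 < y) z (hz : 0 < z) h
  rw [div_eq_div_iff (by positivity) (by positivity)] at h
  linarith

theorem image_div_one_add_Ioi : (fun y : ℝ => y / (1 + y)) '' Ioi 0 = Ioo 0 1 := by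
  ext t
  constructor
  · rintro ⟨y, hy : 0 < y, rfl⟩
    exact ⟨by positivity, (div_lt_one (by positivity)).2 (by linarith)⟩
  · rintro ⟨ht₀, ht₁⟩
    refine ⟨t / (1 - t), div_pos ht₀ (by linarith), ?_⟩
    have : 1 - t ≠ 0 := by linarith
    field_simp
    ring

section Substitution

variable {E : Type*} [NormedAddCommGroup E] [NormedSpace ℝ E]

theorem integrableOn_Ioo_iff_integrableOn_Ioi_div_one_add (g : ℝ → E) :
    IntegrableOn g (Ioo 0 1) ↔
      IntegrableOn (fun y : ℝ => ((1 + y) ^ 2)⁻¹ • g (y / (1 + y))) (Ioi 0) := by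
  rw [← image_div_one_add_Ioi, integrableOn_image_iff_integrableOn_abs_deriv_smul
    measurableSet_Ioi hasDerivWithinAt_div_one_add_Ioi injOn_div_one_add]
  refine integrableOn_congr_fun (fun y _ => ?_) measurableSet_Ioi
  rw [abs_of_nonneg (by positivity)]

theorem integral_Ioo_eq_integral_Ioi_div_one_add (g : ℝ → E) :
    ∫ t in Ioo 0 1, g t = ∫ y in Ioi 0, ((1 + y) ^ 2)⁻¹ • g (y / (1 + y)) := by
  rw [← image_div_one_add_Ioi, integral_image_eq_integral_abs_deriv_smul
    measurableSet_Ioi hasDerivWithinAt_div_one_add_Ioi injOn_div_one_add]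
  refine setIntegral_congr_fun measurableSet_Ioi (fun y _ => ?_)
  rw [abs_of_nonneg (by positivity)]

end Substitution

theorem betaIntegrand_comp_div_one_add {y : ℝ} (hy : 0 < y) (u v : ℂ) :
    ((1 + y) ^ 2)⁻¹ • (((y / (1 + y) : ℝ) : ℂ) ^ (u - 1) * (1 - ((y / (1 + y) : ℝ) : ℂ)) ^ (v - 1))
      = (y : ℂ) ^ (u - 1) * (((1 + y : ℝ) : ℂ) ^ (u + v))⁻¹ := by
  have hp : (0 : ℝ) < 1 + y := by linarith
  have hp₀ : ((1 + y : ℝ) : ℂ) ≠ 0 := by exact_mod_cast hp.ne'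
  have hquot : ((y / (1 + y) : ℝ) : ℂ) = (y : ℂ) * (((1 + y)⁻¹ : ℝ) : ℂ) := by
    push_cast; ring
  have hcompl : 1 - ((y / (1 + y) : ℝ) : ℂ) = (((1 + y)⁻¹ : ℝ) : ℂ) := by
    have : (1 + y : ℂ) ≠ 0 := by exact_mod_cast hp.ne'
    push_cast; field_simp; ring
  have hinv : ∀ w : ℂ, (((1 + y)⁻¹ : ℝ) : ℂ) ^ w = (((1 + y : ℝ) : ℂ) ^ w)⁻¹ := fun w => by
    rw [ofReal_inv, inv_cpow _ _ (by rw [arg_ofReal_of_nonneg hp.le]; positivity)]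
  rw [hcompl, hquot, mul_cpow_ofReal_nonneg hy.le (by positivity), hinv, hinv, Complex.real_smul]
  have hsplit : ((1 + y : ℝ) : ℂ) ^ (u + v) =
      ((1 + y : ℝ) : ℂ) ^ (u - 1) * ((1 + y : ℝ) : ℂ) ^ (v - 1) * ((1 + y : ℝ) : ℂ) ^ (2 : ℂ) := by
    rw [← cpow_add _ _ hp₀, ← cpow_add _ _ hp₀]
    ring_nf
  rw [hsplit, cpow_two]
  push_cast
  field_simp

theorem betaIntegral_eq_integral_Ioi (u v : ℂ) :
    betaIntegral u v = ∫ y in Ioi (0 : ℝ), (y : ℂ) ^ (u - 1) * (((1 + y : ℝ) : ℂ) ^ (u + v))⁻¹ := by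
  rw [betaIntegral, intervalIntegral.integral_of_le zero_le_one, integral_Ioc_eq_integral_Ioo,
    integral_Ioo_eq_integral_Ioi_div_one_add]
  refine setIntegral_congr_fun measurableSet_Ioi fun y hy => ?_
  exact betaIntegrand_comp_div_one_add hy u v

theorem integrableOn_cpow_mul_inv_one_add_cpow {u v : ℂ} (hu : 0 < u.re) (hv : 0 < v.re) :
    IntegrableOn (fun y : ℝ => (y : ℂ) ^ (u - 1) * (((1 + y : ℝ) : ℂ) ^ (u + v))⁻¹) (Ioi 0) := by
  have h := betaIntegral_convergent hu hv
  rw [intervalIntegrable_iff_integrableOn_Ioo_of_le zero_le_one,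
    integrableOn_Ioo_iff_integrableOn_Ioi_div_one_add] at h
  exact h.congr_fun (fun y hy => betaIntegrand_comp_div_one_add hy u v) measurableSet_Ioi

theorem hasMellin_inv_one_add_rpow {a : ℝ} {u : ℂ} (hu₀ : 0 < u.re) (hu₁ : u.re < a) :
    HasMellin (fun y : ℝ => ((((1 + y) ^ a)⁻¹ : ℝ) : ℂ)) u (Gamma u * Gamma (a - u) / Gamma a) := by
  have hv : 0 < (a - u).re := by simpa using hu₁
  have hpt : EqOn (fun y : ℝ => (y : ℂ) ^ (u - 1) • ((((1 + y) ^ a)⁻¹ : ℝ) : ℂ))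
      (fun y : ℝ => (y : ℂ) ^ (u - 1) * (((1 + y : ℝ) : ℂ) ^ (u + (a - u)))⁻¹) (Ioi 0) :=
    fun y (hy : 0 < y) => by
      simp only [add_sub_cancel, smul_eq_mul, ofReal_inv, ofReal_cpow (by linarith : 0 ≤ 1 + y)]
  refine ⟨(integrableOn_cpow_mul_inv_one_add_cpow hu₀ hv).congr_fun hpt.symm measurableSet_Ioi, ?_⟩
  rw [mellin, setIntegral_congr_fun measurableSet_Ioi hpt, ← betaIntegral_eq_integral_Ioi,
    betaIntegral_eq_Gamma_mul_div _ _ hu₀ hv, add_sub_cancel]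

theorem inv_add_sq_rpow_eq {a c : ℝ} (hc : 0 < c) (r : ℝ) :
    ((c + r ^ 2) ^ a)⁻¹ = c ^ (-a) * ((1 + c⁻¹ * r ^ (2 : ℝ)) ^ a)⁻¹ := by
  rw [Real.rpow_two, show c + r ^ 2 = c * (1 + c⁻¹ * r ^ 2) by field_simp,
    Real.mul_rpow hc.le (by positivity), Real.rpow_neg hc.le, mul_inv]

theorem hasMellin_inv_add_sq_rpow {a c : ℝ} (hc : 0 < c) {s : ℂ} (hs₀ : 0 < s.re)
    (hs₁ : s.re < 2 * a) :
    HasMellin (fun r : ℝ => ((((c + r ^ 2) ^ a)⁻¹ : ℝ) : ℂ)) s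
      ((c : ℂ) ^ (s / 2 - a) * (Gamma (s / 2) * Gamma (a - s / 2) / (2 * Gamma a))) := by
  have hre : (s / 2).re = s.re / 2 := by simp
  obtain ⟨hconv, hval⟩ := hasMellin_inv_one_add_rpow (a := a) (u := s / 2)
    (by rw [hre]; linarith) (by rw [hre]; linarith)
  have hfun : (fun r : ℝ => ((((c + r ^ 2) ^ a)⁻¹ : ℝ) : ℂ)) = fun r =>
      c ^ (-a) • (fun x : ℝ => ((((1 + c⁻¹ * x) ^ a)⁻¹ : ℝ) : ℂ)) (r ^ (2 : ℝ)) := by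
    ext r
    rw [inv_add_sq_rpow_eq hc, ofReal_mul, Complex.real_smul]
  have hc' : 0 < c⁻¹ := inv_pos.2 hc
  rw [hfun]
  set g : ℝ → ℂ := fun x => ((((1 + c⁻¹ * x) ^ a)⁻¹ : ℝ) : ℂ)
  refine ⟨MellinConvergent.const_smul ?_ _, ?_⟩
  · rw [MellinConvergent.comp_rpow (f := g) two_ne_zero, ofReal_ofNat,
      MellinConvergent.comp_mul_left (f := fun x : ℝ => ((((1 + x) ^ a)⁻¹ : ℝ) : ℂ)) hc']
    exact hconv
  · rw [mellin_const_smul, mellin_comp_rpow g, ofReal_ofNat,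
      mellin_comp_mul_left (fun x : ℝ => ((((1 + x) ^ a)⁻¹ : ℝ) : ℂ)) _ hc', hval]
    have hc₀ : (c : ℂ) ≠ 0 := ofReal_ne_zero.2 hc.ne'
    have hcast : ((c ^ (-a) : ℝ) : ℂ) = (c : ℂ) ^ (-(a : ℂ)) := by
      rw [ofReal_cpow hc.le, ofReal_neg]
    have hinv : ((c⁻¹ : ℝ) : ℂ) ^ (-(s / 2)) = (c : ℂ) ^ (s / 2) := by
      rw [ofReal_inv, inv_cpow _ _ (by rw [arg_ofReal_of_nonneg hc.le]; positivity), cpow_neg,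
        inv_inv]
    have hsplit : (c : ℂ) ^ (s / 2 - a) = (c : ℂ) ^ (-(a : ℂ)) * (c : ℂ) ^ (s / 2) := by
      rw [← cpow_add _ _ hc₀, neg_add_eq_sub]
    rw [hinv, Complex.real_smul, hcast, hsplit, abs_two, smul_eq_mul, Complex.real_smul]
    push_cast
    ring

theorem mellin_tsum_of_summable_integral_norm {ι E : Type*} [Countable ι] [NormedAddCommGroup E]
    [NormedSpace ℂ E] {f : ι → ℝ → E} {s : ℂ} (hf : ∀ i, MellinConvergent (f i) s)
    (hsum : Summable fun i => ∫ t in Ioi (0 : ℝ), ‖(t : ℂ) ^ (s - 1) • f i t‖) :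
    mellin (fun t => ∑' i, f i t) s = ∑' i, mellin (f i) s := by
  simp only [mellin, ← tsum_const_smul'']
  exact (integral_tsum_of_summable_integral_norm hf hsum).symm

theorem integral_norm_cpow_smul_ofReal_eq_norm_mellin_re {f : ℝ → ℝ}
    (hf : ∀ t ∈ Ioi (0 : ℝ), 0 ≤ f t) (s : ℂ) :
    ∫ t in Ioi (0 : ℝ), ‖(t : ℂ) ^ (s - 1) • (f t : ℂ)‖ = ‖mellin (fun t => (f t : ℂ)) s.re‖ := by
  have hpt : EqOn (fun t : ℝ => ‖(t : ℂ) ^ (s - 1) • (f t : ℂ)‖)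
      (fun t => t ^ (s.re - 1) * f t) (Ioi 0) := fun t (ht : 0 < t) => by
    simp only [smul_eq_mul, norm_mul, norm_cpow_eq_rpow_re_of_pos ht, sub_re, one_re, norm_real,
      Real.norm_of_nonneg (hf t ht)]
  have hre : mellin (fun t => (f t : ℂ)) s.re = ((∫ t in Ioi 0, t ^ (s.re - 1) * f t : ℝ) : ℂ) := by
    rw [mellin, ← integral_complex_ofReal]
    refine setIntegral_congr_fun measurableSet_Ioi fun t (ht : 0 < t) => ?_
    rw [smul_eq_mul, ofReal_mul, ofReal_cpow ht.le, ofReal_sub, ofReal_one]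
  rw [setIntegral_congr_fun measurableSet_Ioi hpt, hre, norm_real, Real.norm_of_nonneg
    (setIntegral_nonneg measurableSet_Ioi fun t ht =>
      mul_nonneg (Real.rpow_nonneg (le_of_lt ht) _) (hf t ht))]

theorem hasMellin_div_add_sq_rpow (A : ℝ) {a c : ℝ} (hc : 0 < c) {s : ℂ} (hs₀ : 0 < s.re)
    (hs₁ : s.re < 2 * a) :
    HasMellin (fun r : ℝ => ((A / (c + r ^ 2) ^ a : ℝ) : ℂ)) s
      ((A : ℂ) * (c : ℂ) ^ (s / 2 - a) * (Gamma (s / 2) * Gamma (a - s / 2) / (2 * Gamma a))) := by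
  obtain ⟨hconv, hval⟩ := hasMellin_inv_add_sq_rpow hc hs₀ hs₁
  have h := hasMellin_const_smul hconv (A : ℂ)
  rw [hval, smul_eq_mul, ← mul_assoc] at h
  simpa only [div_eq_mul_inv A, ofReal_mul, smul_eq_mul] using h

theorem mellin_tsum_div_add_sq_rpow {A c : ℕ → ℝ} {a : ℝ} (hA : ∀ n, 0 ≤ A n)
    (hc : ∀ n, 0 < c n) {s : ℂ} (hs₀ : 0 < s.re) (hs₁ : s.re < 2 * a)
    (hsum : Summable fun n => ‖(A n : ℂ) * (c n : ℂ) ^ (s / 2 - a)‖) :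
    mellin (fun r : ℝ => ((∑' n, A n / (c n + r ^ 2) ^ a : ℝ) : ℂ)) s =
      (∑' n, (A n : ℂ) * (c n : ℂ) ^ (s / 2 - a)) *
        (Gamma (s / 2) * Gamma (a - s / 2) / (2 * Gamma a)) := by
  have hnorm : ∀ n, ∫ t in Ioi (0 : ℝ), ‖(t : ℂ) ^ (s - 1) • ((A n / (c n + t ^ 2) ^ a : ℝ) : ℂ)‖
      = ‖(A n : ℂ) * (c n : ℂ) ^ (s / 2 - a)‖ *
        ‖Gamma (s.re / 2) * Gamma (a - s.re / 2) / (2 * Gamma a)‖ := by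
    intro n
    have hterm_nonneg : ∀ t : ℝ, 0 ≤ A n / (c n + t ^ 2) ^ a := fun t => by
      have := hA n; have := hc n; positivity
    rw [integral_norm_cpow_smul_ofReal_eq_norm_mellin_re (fun t _ => hterm_nonneg t),
      (hasMellin_div_add_sq_rpow (A n) (hc n) (by simpa using hs₀) (by simpa using hs₁)).2,
      norm_mul, norm_mul, norm_mul, norm_cpow_eq_rpow_re_of_pos (hc n),
      norm_cpow_eq_rpow_re_of_pos (hc n)]
    simp
  have hterm := fun n => hasMellin_div_add_sq_rpow (A n) (hc n) hs₀ hs₁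
  simp only [ofReal_tsum]
  rw [mellin_tsum_of_summable_integral_norm (fun n => (hterm n).1)
    ((hsum.mul_right _).congr fun n => (hnorm n).symm), tsum_congr fun n => (hterm n).2,
    tsum_mul_right]

theorem summable_rpow_mul_log_rpow_nat_add_two {b : ℝ} (d : ℝ) (hb : b < -1) :
    Summable fun n : ℕ => ((n : ℝ) + 2) ^ b * Real.log ((n : ℝ) + 2) ^ d := by
  obtain ⟨b', hbb', hb'⟩ := exists_between hb
  have hsum : Summable fun n : ℕ => ((n : ℝ) + 2) ^ b' := by
    have := (summable_nat_add_iff 2).2 (Real.summable_nat_rpow.2 hb')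
    exact_mod_cast this
  refine summable_of_isBigO_nat hsum ?_
  have hlog : (fun n : ℕ => Real.log ((n : ℝ) + 2) ^ d) =o[atTop]
      fun n : ℕ => ((n : ℝ) + 2) ^ (b' - b) :=
    (isLittleO_log_rpow_rpow_atTop d (by linarith)).comp_tendsto
      (tendsto_atTop_add_const_right _ _ tendsto_natCast_atTop_atTop)
  refine ((hlog.isBigO.mul (Asymptotics.isBigO_refl _ _)).congr (fun n => mul_comm _ _) ?_)
  intro n
  rw [← Real.rpow_add (by positivity), sub_add_cancel]

/-- `(log x)^v x^w`, with complex powers `y^w = exp (w log y)` as in `D(s)`. -/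
noncomputable def logPowMulPow (v w : ℂ) (x : ℝ) : ℂ :=
  exp (v * (Real.log (Real.log x) : ℂ)) * exp (w * (Real.log x : ℂ))

theorem norm_logPowMulPow {x : ℝ} (hx : 1 < x) (v w : ℂ) :
    ‖logPowMulPow v w x‖ = x ^ w.re * Real.log x ^ v.re := by
  rw [logPowMulPow, norm_mul, norm_exp, norm_exp, re_mul_ofReal, re_mul_ofReal, mul_comm,
    Real.rpow_def_of_pos (by linarith), Real.rpow_def_of_pos (Real.log_pos hx), mul_comm w.re,
    mul_comm v.re]

theorem ofReal_rpow_mul_log_rpow_mul_cpow_eq_logPowMulPow {x : ℝ} (hx : 1 < x) (α β γ δ : ℝ)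
    (z : ℂ) :
    ((x ^ α * Real.log x ^ γ : ℝ) : ℂ) * ((x ^ β * Real.log x ^ δ : ℝ) : ℂ) ^ z =
      logPowMulPow (γ + δ * z) (α + β * z) x := by
  have hexp : ∀ p q : ℝ,
      x ^ p * Real.log x ^ q = Real.exp (p * Real.log x + q * Real.log (Real.log x)) := by
    intro p q
    rw [Real.rpow_def_of_pos (by linarith), Real.rpow_def_of_pos (Real.log_pos hx),
      ← Real.exp_add]
    ring_nf
  rw [hexp, hexp, cpow_def_of_ne_zero (ofReal_ne_zero.2 (Real.exp_pos _).ne'),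
    ← ofReal_log (Real.exp_pos _).le, Real.log_exp, ofReal_exp, logPowMulPow, ← Complex.exp_add,
    ← Complex.exp_add]
  push_cast
  ring_nf

theorem mathieu_power_log_mellin_transform_general
    (α β γ δ μ : ℝ) (hα : 0 < α) (hβ : 0 < β)
    (s : ℂ) (hs₀ : 0 < s.re) (hs₁ : s.re < -2 * (α + 1) / β + 2 * (μ + 1)) :
    Summable (fun n : ℕ =>
      ‖Complex.exp (((δ : ℂ) * s / 2 + (γ : ℂ) - (δ : ℂ) * ((μ : ℂ) + 1)) *
          (Real.log (Real.log ((n : ℝ) + 2)) : ℂ)) *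
        Complex.exp (((β : ℂ) * s / 2 + (α : ℂ) - (β : ℂ) * ((μ : ℂ) + 1)) *
          (Real.log ((n : ℝ) + 2) : ℂ))‖) ∧
    ∫ r in Set.Ioi (0 : ℝ),
        ((∑' n : ℕ, ((n : ℝ) + 2) ^ α * (Real.log ((n : ℝ) + 2)) ^ γ /
          (((n : ℝ) + 2) ^ β * (Real.log ((n : ℝ) + 2)) ^ δ + r ^ 2) ^ (μ + 1) : ℝ) : ℂ)
        * (r : ℂ) ^ (s - 1)
      = (∑' n : ℕ,
          Complex.exp (((δ : ℂ) * s / 2 + (γ : ℂ) - (δ : ℂ) * ((μ : ℂ) + 1)) *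
            (Real.log (Real.log ((n : ℝ) + 2)) : ℂ)) *
          Complex.exp (((β : ℂ) * s / 2 + (α : ℂ) - (β : ℂ) * ((μ : ℂ) + 1)) *
            (Real.log ((n : ℝ) + 2) : ℂ)))
        * Complex.Gamma ((μ : ℂ) + 1 - s / 2) * Complex.Gamma (s / 2)
        / (2 * Complex.Gamma ((μ : ℂ) + 1)) := by
  have hx : ∀ n : ℕ, 1 < (n : ℝ) + 2 := fun n => by linarith [n.cast_nonneg (α := ℝ)]
  have hσ : s.re < 2 * (μ + 1) := by
    have : -2 * (α + 1) / β < 0 := div_neg_of_neg_of_pos (by linarith) hβ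
    linarith
  have hb : β * s.re / 2 + α - β * (μ + 1) < -1 := by
    have := (lt_div_iff₀ hβ).1 (by linarith : s.re - 2 * (μ + 1) < -2 * (α + 1) / β)
    linarith
  set v : ℂ := (δ : ℂ) * s / 2 + (γ : ℂ) - (δ : ℂ) * ((μ : ℂ) + 1) with hv
  set w : ℂ := (β : ℂ) * s / 2 + (α : ℂ) - (β : ℂ) * ((μ : ℂ) + 1) with hw
  show Summable (fun n : ℕ => ‖logPowMulPow v w ((n : ℝ) + 2)‖) ∧
    _ = (∑' n : ℕ, logPowMulPow v w ((n : ℝ) + 2)) * _ * _ / _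
  have hD : Summable fun n : ℕ => ‖logPowMulPow v w ((n : ℝ) + 2)‖ :=
    (summable_rpow_mul_log_rpow_nat_add_two v.re (by simpa [hw] using hb)).congr
      fun n => (norm_logPowMulPow (hx n) v w).symm
  have hterm : ∀ n : ℕ, ((((n : ℝ) + 2) ^ α * Real.log ((n : ℝ) + 2) ^ γ : ℝ) : ℂ) *
      ((((n : ℝ) + 2) ^ β * Real.log ((n : ℝ) + 2) ^ δ : ℝ) : ℂ) ^ (s / 2 - ((μ + 1 : ℝ) : ℂ)) =
      logPowMulPow v w ((n : ℝ) + 2) := fun n => by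
    rw [ofReal_rpow_mul_log_rpow_mul_cpow_eq_logPowMulPow (hx n), hv, hw]
    congr 1 <;> push_cast <;> ring
  have hpos : ∀ n : ℕ, 0 < (n : ℝ) + 2 := fun n => by linarith [hx n]
  have hlog : ∀ n : ℕ, 0 < Real.log ((n : ℝ) + 2) := fun n => Real.log_pos (hx n)
  have key := mellin_tsum_div_add_sq_rpow (a := μ + 1)
    (fun n => mul_nonneg (Real.rpow_nonneg (hpos n).le _) (Real.rpow_nonneg (hlog n).le _))
    (fun n => mul_pos (Real.rpow_pos_of_pos (hpos n) _) (Real.rpow_pos_of_pos (hlog n) _))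
    hs₀ hσ (hD.congr fun n => congrArg norm (hterm n).symm)
  rw [tsum_congr hterm] at key
  refine ⟨hD, (setIntegral_congr_fun measurableSet_Ioi fun r _ => mul_comm _ _).trans
    (key.trans ?_)⟩
  push_cast
  ring

/-- Equation (2.8): the Mellin transform of the power-logarithmic
Mathieu-type series `S_{α,β,γ,δ,μ}` on the strip `0 < Re(s) < ŝ`,
`ŝ = −2(α+1)/β + 2(μ+1)`, equals `D(s) Γ(μ+1−s/2) Γ(s/2) / (2 Γ(μ+1))`, where
`D(s) = ∑_{n=2}^∞ (log n)^{δs/2+γ−δ(μ+1)} n^{βs/2+α−β(μ+1)}` (with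
`n^w = exp(w log n)` and `(log n)^w = exp(w log log n)`), the series defining
`D(s)` being absolutely convergent for `Re(s) < ŝ`. -/
theorem mathieu_power_log_mellin_transform
    (α β γ δ μ : ℝ) (hα : 0 < α) (hβ : 0 < β) (hμ : 0 ≤ μ)
    (hconv : α - β * (μ + 1) < -1)
    (s : ℂ) (hs₀ : 0 < s.re) (hs₁ : s.re < -2 * (α + 1) / β + 2 * (μ + 1)) :
    Summable (fun n : ℕ =>
      ‖Complex.exp (((δ : ℂ) * s / 2 + (γ : ℂ) - (δ : ℂ) * ((μ : ℂ) + 1)) *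
          (Real.log (Real.log ((n : ℝ) + 2)) : ℂ)) *
        Complex.exp (((β : ℂ) * s / 2 + (α : ℂ) - (β : ℂ) * ((μ : ℂ) + 1)) *
          (Real.log ((n : ℝ) + 2) : ℂ))‖) ∧
    ∫ r in Set.Ioi (0 : ℝ),
        ((∑' n : ℕ, ((n : ℝ) + 2) ^ α * (Real.log ((n : ℝ) + 2)) ^ γ /
          (((n : ℝ) + 2) ^ β * (Real.log ((n : ℝ) + 2)) ^ δ + r ^ 2) ^ (μ + 1) : ℝ) : ℂ)
        * (r : ℂ) ^ (s - 1)
      = (∑' n : ℕ,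
          Complex.exp (((δ : ℂ) * s / 2 + (γ : ℂ) - (δ : ℂ) * ((μ : ℂ) + 1)) *
            (Real.log (Real.log ((n : ℝ) + 2)) : ℂ)) *
          Complex.exp (((β : ℂ) * s / 2 + (α : ℂ) - (β : ℂ) * ((μ : ℂ) + 1)) *
            (Real.log ((n : ℝ) + 2) : ℂ)))
        * Complex.Gamma ((μ : ℂ) + 1 - s / 2) * Complex.Gamma (s / 2)
        / (2 * Complex.Gamma ((μ : ℂ) + 1)) :=
  mathieu_power_log_mellin_transform_general α β γ δ μ hα hβ s hs₀ hs₁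
end

section
/- Let α, β > 0 and μ ≥ 0 with α − β(μ+1) < 0. For r ≥ 1, let n₀(r) be the unique nonnegative integer with (n₀(r)!)^β ≤ r² < ((n₀(r)+1)!)^β, and set A_n(r) := (n!)^α / ((n!)^β + r²)^{μ+1}. Then S^!_{α,β,μ}(r) / (A_{n₀(r)}(r) + A_{n₀(r)+1}(r)) → 1 as r → ∞. -/
open Filter Real

lemma mf_fact_bound1 (i k : ℕ) : i.factorial * 2 ^ k ≤ (i + k + 1).factorial := by
  induction k with
  | zero => simpa using Nat.factorial_le (Nat.le_succ i)
  | succ k ih =>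
    have h1 : i + (k + 1) + 1 = (i + k + 1) + 1 := by omega
    rw [h1, Nat.factorial_succ, pow_succ, ← mul_assoc]
    calc i.factorial * 2 ^ k * 2 ≤ (i + k + 1).factorial * 2 :=
          Nat.mul_le_mul_right 2 ih
      _ ≤ (i + k + 1 + 1) * (i + k + 1).factorial := by
          rw [mul_comm]; exact Nat.mul_le_mul (by omega) le_rfl

lemma mf_fact_bound2 (i k : ℕ) (hi : 1 ≤ i) : i.factorial * 2 ^ k ≤ (i + k).factorial := by
  induction k with
  | zero => simp
  | succ k ih =>
    have h1 : i + (k + 1) = (i + k) + 1 := by omega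
    rw [h1, Nat.factorial_succ, pow_succ, ← mul_assoc]
    calc i.factorial * 2 ^ k * 2 ≤ (i + k).factorial * 2 :=
          Nat.mul_le_mul_right 2 ih
      _ ≤ (i + k + 1) * (i + k).factorial := by
          rw [mul_comm]; exact Nat.mul_le_mul (by omega) le_rfl

lemma mf_fact_main_left (i m : ℕ) (h : i < m) :
    i.factorial * 2 ^ (m - i - 2) * m ≤ m.factorial := by
  rcases eq_or_lt_of_le (Nat.succ_le_of_lt h) with he | hlt
  · have h2 : m - i - 2 = 0 := by omega
    have h3 : m = i + 1 := by omega
    subst h3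
    simp [h2, Nat.factorial_succ, mul_comm]
  · have h3 : m - 1 = i + (m - i - 2) + 1 := by omega
    have h4 : i.factorial * 2 ^ (m - i - 2) ≤ (m - 1).factorial := by
      rw [h3]; exact mf_fact_bound1 i (m - i - 2)
    calc i.factorial * 2 ^ (m - i - 2) * m ≤ (m - 1).factorial * m :=
          Nat.mul_le_mul_right m h4
      _ = m.factorial := by
          rw [mul_comm]; exact Nat.mul_factorial_pred (by omega)

lemma mf_pow_rpow (x c : ℝ) (hx : 0 ≤ x) (k : ℕ) : (x ^ k) ^ c = (x ^ c) ^ k := by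
  rw [← rpow_natCast x k, ← rpow_mul hx, mul_comm ((k:ℝ)) c, rpow_mul hx, rpow_natCast]

lemma mf_q_pos {c : ℝ} : (0:ℝ) < (2:ℝ) ^ (-c) := rpow_pos_of_pos two_pos _

lemma mf_q_lt_one {c : ℝ} (hc : 0 < c) : (2:ℝ) ^ (-c) < 1 :=
  rpow_lt_one_of_one_lt_of_neg one_lt_two (neg_neg_iff_pos.mpr hc)

lemma mf_left_term (α : ℝ) (hα : 0 < α) (i m : ℕ) (h : i < m) :
    ((i.factorial : ℝ)) ^ α ≤
      ((m.factorial : ℝ)) ^ α * (m:ℝ) ^ (-α) * (4:ℝ) ^ α * ((2:ℝ) ^ (-α)) ^ (m - i) := by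
  set q : ℝ := (2:ℝ) ^ (-α) with hqdef
  have hq0 : 0 < q := mf_q_pos
  have hq1 : q ≤ 1 := (mf_q_lt_one hα).le
  have hm0 : (0:ℝ) < (m:ℝ) := by
    have : 0 < m := by omega
    exact_mod_cast this
  have hc : ((i.factorial:ℝ)) * (2:ℝ) ^ (m - i - 2) * (m:ℝ) ≤ (m.factorial:ℝ) := by
    exact_mod_cast mf_fact_main_left i m h
  have hstar : ((i.factorial:ℝ)) ^ α * ((2:ℝ) ^ (m - i - 2)) ^ α * (m:ℝ) ^ α
      ≤ ((m.factorial:ℝ)) ^ α := by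
    have := rpow_le_rpow (by positivity) hc hα.le
    rwa [mul_rpow (by positivity) (by positivity), mul_rpow (by positivity) (by positivity)]
      at this
  have hq2 : ((2:ℝ) ^ (m - i - 2 : ℕ)) ^ α = (q ^ (m - i - 2))⁻¹ := by
    rw [mf_pow_rpow _ _ (by norm_num), hqdef, rpow_neg (by norm_num), inv_pow, inv_inv]
  have hkey : q ^ (m - i - 2) ≤ (4:ℝ) ^ α * q ^ (m - i) := by
    have he : (m - i - 2) + min (m - i) 2 = m - i := by omega
    have h1 : q ^ (m - i) = q ^ (m - i - 2) * q ^ (min (m - i) 2) := by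
      rw [← pow_add, he]
    have h2 : q ^ 2 ≤ q ^ (min (m - i) 2) :=
      pow_le_pow_of_le_one hq0.le hq1 (min_le_right _ _)
    have h4 : (4:ℝ) ^ α * q ^ 2 = 1 := by
      have hq4 : q ^ 2 = (4:ℝ) ^ (-α) := by
        rw [hqdef, sq, ← mul_rpow (by norm_num) (by norm_num)]; norm_num
      rw [hq4, ← rpow_add (by norm_num)]; norm_num
    calc q ^ (m - i - 2) = (4:ℝ) ^ α * q ^ 2 * q ^ (m - i - 2) := by rw [h4, one_mul]
      _ ≤ (4:ℝ) ^ α * q ^ (min (m - i) 2) * q ^ (m - i - 2) := by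
          have h40 : (0:ℝ) ≤ (4:ℝ) ^ α := by positivity
          exact mul_le_mul_of_nonneg_right (mul_le_mul_of_nonneg_left h2 h40)
            (pow_nonneg hq0.le _)
      _ = (4:ℝ) ^ α * q ^ (m - i) := by rw [h1]; ring
  have ha : (0:ℝ) < ((2:ℝ) ^ (m - i - 2 : ℕ)) ^ α := by positivity
  have hb : (0:ℝ) < (m:ℝ) ^ α := by positivity
  have hX : ((i.factorial:ℝ)) ^ α ≤
      ((m.factorial:ℝ)) ^ α * (m:ℝ) ^ (-α) * q ^ (m - i - 2) := by
    have h5 : ((i.factorial:ℝ)) ^ α ≤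
        ((m.factorial:ℝ)) ^ α / (((2:ℝ) ^ (m - i - 2 : ℕ)) ^ α * (m:ℝ) ^ α) := by
      rw [le_div_iff₀ (by positivity), ← mul_assoc]
      exact hstar
    calc ((i.factorial:ℝ)) ^ α
        ≤ ((m.factorial:ℝ)) ^ α / (((2:ℝ) ^ (m - i - 2 : ℕ)) ^ α * (m:ℝ) ^ α) := h5
      _ = ((m.factorial:ℝ)) ^ α * (m:ℝ) ^ (-α) * q ^ (m - i - 2) := by
          rw [hq2, rpow_neg hm0.le]
          field_simp
  calc ((i.factorial:ℝ)) ^ α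
      ≤ ((m.factorial:ℝ)) ^ α * (m:ℝ) ^ (-α) * q ^ (m - i - 2) := hX
    _ ≤ ((m.factorial:ℝ)) ^ α * (m:ℝ) ^ (-α) * ((4:ℝ) ^ α * q ^ (m - i)) := by
        have hF : (0:ℝ) ≤ ((m.factorial:ℝ)) ^ α * (m:ℝ) ^ (-α) := by positivity
        exact mul_le_mul_of_nonneg_left hkey hF
    _ = ((m.factorial:ℝ)) ^ α * (m:ℝ) ^ (-α) * (4:ℝ) ^ α * q ^ (m - i) := by ring

lemma mf_right_term (δ : ℝ) (hδ : 0 < δ) (m k : ℕ) :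
    (((m + 2 + k).factorial : ℝ)) ^ (-δ) ≤
      (((m + 1).factorial : ℝ)) ^ (-δ) * ((m:ℝ) + 2) ^ (-δ) * ((2:ℝ) ^ (-δ)) ^ k := by
  have hc : ((m + 1).factorial : ℝ) * ((m:ℝ) + 2) * (2:ℝ) ^ k ≤ ((m + 2 + k).factorial : ℝ) := by
    have h1 : (m + 2).factorial * 2 ^ k ≤ (m + 2 + k).factorial := mf_fact_bound2 (m + 2) k (by omega)
    have h2 : (m + 2).factorial = (m + 2) * (m + 1).factorial := Nat.factorial_succ (m + 1)
    rw [h2] at h1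
    have h3 : (((m + 2) * (m + 1).factorial * 2 ^ k : ℕ) : ℝ) ≤
        (((m + 2 + k).factorial : ℕ) : ℝ) := Nat.cast_le.mpr h1
    push_cast at h3
    nlinarith [h3]
  have hpos : (0:ℝ) < ((m + 1).factorial : ℝ) * ((m:ℝ) + 2) * (2:ℝ) ^ k := by positivity
  have h3 := rpow_le_rpow_of_nonpos hpos hc (neg_nonpos.mpr hδ.le)
  calc (((m + 2 + k).factorial : ℝ)) ^ (-δ)
      ≤ (((m + 1).factorial : ℝ) * ((m:ℝ) + 2) * (2:ℝ) ^ k) ^ (-δ) := h3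
    _ = (((m + 1).factorial : ℝ)) ^ (-δ) * ((m:ℝ) + 2) ^ (-δ) * ((2:ℝ) ^ (-δ)) ^ k := by
        rw [mul_rpow (by positivity) (by positivity), mul_rpow (by positivity) (by positivity),
          mf_pow_rpow _ _ (by norm_num)]

lemma mf_summable_fact (δ : ℝ) (hδ : 0 < δ) :
    Summable (fun n : ℕ => ((n.factorial : ℝ)) ^ (-δ)) := by
  apply summable_of_ratio_norm_eventually_le (mf_q_lt_one hδ)
  filter_upwards [eventually_ge_atTop 1] with n hn
  rw [Real.norm_of_nonneg (by positivity), Real.norm_of_nonneg (by positivity)]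
  have h1 : (((n+1).factorial : ℕ) : ℝ) = ((n:ℝ) + 1) * (n.factorial : ℝ) := by
    rw [Nat.factorial_succ]; push_cast; ring
  rw [h1, mul_rpow (by positivity) (by positivity)]
  have h2 : ((n:ℝ) + 1) ^ (-δ) ≤ (2:ℝ) ^ (-δ) := by
    apply rpow_le_rpow_of_nonpos two_pos _ (neg_nonpos.mpr hδ.le)
    have : (2:ℕ) ≤ n + 1 := by omega
    exact_mod_cast this
  exact mul_le_mul_of_nonneg_right h2 (by positivity)

lemma mf_geom_tail (q : ℝ) (hq0 : 0 ≤ q) (hq1 : q < 1) (m : ℕ) :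
    ∑ i ∈ Finset.range m, q ^ (m - i) ≤ (1 - q)⁻¹ := by
  calc ∑ i ∈ Finset.range m, q ^ (m - i)
      ≤ ∑ i ∈ Finset.range m, q ^ (m - 1 - i) := by
        apply Finset.sum_le_sum
        intro i hi
        exact pow_le_pow_of_le_one hq0 hq1.le (by omega)
    _ = ∑ i ∈ Finset.range m, q ^ i := Finset.sum_range_reflect (fun j => q ^ j) m
    _ ≤ ∑' i : ℕ, q ^ i := Summable.sum_le_tsum _ (fun i _ => by positivity)
        (summable_geometric_of_lt_one hq0 hq1)
    _ = (1 - q)⁻¹ := tsum_geometric_of_lt_one hq0 hq1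

lemma mf_A_pos (α β μ r : ℝ) (hr : 1 ≤ r) (n : ℕ) :
    0 < (n.factorial : ℝ) ^ α / ((n.factorial : ℝ) ^ β + r ^ 2) ^ (μ + 1) := by
  have h1 : (0:ℝ) < (n.factorial : ℝ) := by exact_mod_cast n.factorial_pos
  have h2 : (0:ℝ) < r := lt_of_lt_of_le one_pos hr
  positivity

lemma mf_A_le (α β μ : ℝ) (hβ : 0 < β) (hμ : 0 ≤ μ) (r : ℝ) (hr : 1 ≤ r) (n : ℕ) :
    (n.factorial : ℝ) ^ α / ((n.factorial : ℝ) ^ β + r ^ 2) ^ (μ + 1) ≤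
      (n.factorial : ℝ) ^ (α - β * (μ + 1)) := by
  have h1 : (0:ℝ) < (n.factorial : ℝ) := by exact_mod_cast n.factorial_pos
  have h2 : (0:ℝ) ≤ r ^ 2 := by positivity
  have hbβ : (0:ℝ) < (n.factorial : ℝ) ^ β := by positivity
  have hden : ((n.factorial:ℝ) ^ β) ^ (μ + 1) ≤ ((n.factorial:ℝ) ^ β + r ^ 2) ^ (μ + 1) :=
    rpow_le_rpow (by positivity) (by linarith) (by linarith)
  calc (n.factorial : ℝ) ^ α / ((n.factorial : ℝ) ^ β + r ^ 2) ^ (μ + 1)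
      ≤ (n.factorial : ℝ) ^ α / ((n.factorial:ℝ) ^ β) ^ (μ + 1) := by
        gcongr
    _ = (n.factorial : ℝ) ^ (α - β * (μ + 1)) := by
        rw [← rpow_mul h1.le, ← rpow_sub h1]

lemma mf_main_bound (α β μ δ r : ℝ) (hα : 0 < α) (hβ : 0 < β) (hμ : 0 ≤ μ)
    (hδ : 0 < δ) (hδdef : δ = β * (μ + 1) - α) (hr : 1 ≤ r) (m : ℕ)
    (hm1 : ((m.factorial : ℝ)) ^ β ≤ r ^ 2)
    (hm2 : r ^ 2 < (((m + 1).factorial : ℝ)) ^ β) :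
    1 ≤ (∑' n : ℕ, (n.factorial : ℝ) ^ α / ((n.factorial : ℝ) ^ β + r ^ 2) ^ (μ + 1)) /
        ((m.factorial : ℝ) ^ α / ((m.factorial : ℝ) ^ β + r ^ 2) ^ (μ + 1) +
         ((m + 1).factorial : ℝ) ^ α / (((m + 1).factorial : ℝ) ^ β + r ^ 2) ^ (μ + 1)) ∧
    (∑' n : ℕ, (n.factorial : ℝ) ^ α / ((n.factorial : ℝ) ^ β + r ^ 2) ^ (μ + 1)) /
        ((m.factorial : ℝ) ^ α / ((m.factorial : ℝ) ^ β + r ^ 2) ^ (μ + 1) +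
         ((m + 1).factorial : ℝ) ^ α / (((m + 1).factorial : ℝ) ^ β + r ^ 2) ^ (μ + 1)) ≤
      1 + (2:ℝ) ^ (μ + 1) * (4:ℝ) ^ α * (1 - (2:ℝ) ^ (-α))⁻¹ * (m:ℝ) ^ (-α)
        + (2:ℝ) ^ (μ + 1) * (1 - (2:ℝ) ^ (-δ))⁻¹ * ((m:ℝ) + 2) ^ (-δ) := by
  set q1 : ℝ := (2:ℝ) ^ (-α) with hq1def
  set q2 : ℝ := (2:ℝ) ^ (-δ) with hq2def
  have hq10 : 0 < q1 := mf_q_pos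
  have hq11 : q1 < 1 := mf_q_lt_one hα
  have hq20 : 0 < q2 := mf_q_pos
  have hq21 : q2 < 1 := mf_q_lt_one hδ
  have hr0 : (0:ℝ) < r := lt_of_lt_of_le one_pos hr
  have hr2 : (0:ℝ) < r ^ 2 := by positivity
  set A : ℕ → ℝ := fun n => (n.factorial : ℝ) ^ α / ((n.factorial : ℝ) ^ β + r ^ 2) ^ (μ + 1)
    with hA
  have hApos : ∀ n, 0 < A n := fun n => mf_A_pos α β μ r hr n
  have hAle : ∀ n, A n ≤ (n.factorial : ℝ) ^ (-δ) := by
    intro n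
    have h := mf_A_le α β μ hβ hμ r hr n
    rwa [show α - β * (μ + 1) = -δ by rw [hδdef]; ring] at h
  have hSumA : Summable A :=
    Summable.of_nonneg_of_le (fun n => (hApos n).le) hAle (mf_summable_fact δ hδ)
  set L := ∑ i ∈ Finset.range m, A i with hLdef
  set R := ∑' k : ℕ, A (k + (m + 2)) with hRdef
  have hS : ∑' n, A n = L + A m + A (m + 1) + R := by
    rw [← Summable.sum_add_tsum_nat_add (m + 2) hSumA, Finset.sum_range_succ, Finset.sum_range_succ]
  have hL0 : 0 ≤ L := Finset.sum_nonneg fun i _ => (hApos i).le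
  have hR0 : 0 ≤ R := tsum_nonneg fun k => (hApos _).le
  have hD : 0 < A m + A (m + 1) := add_pos (hApos m) (hApos (m + 1))
  -- lower bound for A m
  have hAm_lb : (m.factorial : ℝ) ^ α / (r ^ 2) ^ (μ + 1) ≤ (2:ℝ) ^ (μ + 1) * A m := by
    have hXpos : (0:ℝ) ≤ (m.factorial : ℝ) ^ α := by positivity
    have hDpos : (0:ℝ) < ((m.factorial : ℝ) ^ β + r ^ 2) ^ (μ + 1) := by positivity
    have hden : ((m.factorial : ℝ) ^ β + r ^ 2) ^ (μ + 1) ≤ (2:ℝ) ^ (μ + 1) * (r ^ 2) ^ (μ + 1) := by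
      rw [← mul_rpow (by norm_num) hr2.le]
      exact rpow_le_rpow (by positivity) (by linarith) (by linarith)
    rw [hA, ← mul_div_assoc, div_le_div_iff₀ (by positivity) hDpos]
    calc (m.factorial : ℝ) ^ α * ((m.factorial : ℝ) ^ β + r ^ 2) ^ (μ + 1)
        ≤ (m.factorial : ℝ) ^ α * ((2:ℝ) ^ (μ + 1) * (r ^ 2) ^ (μ + 1)) :=
          mul_le_mul_of_nonneg_left hden hXpos
      _ = (2:ℝ) ^ (μ + 1) * (m.factorial : ℝ) ^ α * (r ^ 2) ^ (μ + 1) := by ring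
  -- lower bound for A (m+1)
  have hA1_lb : (((m + 1).factorial : ℝ)) ^ (-δ) ≤ (2:ℝ) ^ (μ + 1) * A (m + 1) := by
    have hfpos : (0:ℝ) < ((m + 1).factorial : ℝ) := by exact_mod_cast (m + 1).factorial_pos
    have hXpos : (0:ℝ) ≤ ((m + 1).factorial : ℝ) ^ α := by positivity
    have hYpos : (0:ℝ) < (((m + 1).factorial : ℝ) ^ β) ^ (μ + 1) := by positivity
    have hDpos : (0:ℝ) < (((m + 1).factorial : ℝ) ^ β + r ^ 2) ^ (μ + 1) := by positivity
    have hden : (((m + 1).factorial : ℝ) ^ β + r ^ 2) ^ (μ + 1) ≤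
        (2:ℝ) ^ (μ + 1) * (((m + 1).factorial : ℝ) ^ β) ^ (μ + 1) := by
      rw [← mul_rpow (by norm_num) (by positivity)]
      exact rpow_le_rpow (by positivity) (by linarith) (by linarith)
    have hid : (((m + 1).factorial : ℝ)) ^ (-δ) =
        ((m + 1).factorial : ℝ) ^ α / (((m + 1).factorial : ℝ) ^ β) ^ (μ + 1) := by
      rw [← rpow_mul hfpos.le, ← rpow_sub hfpos]
      congr 1
      rw [hδdef]; ring
    rw [hid, hA, ← mul_div_assoc, div_le_div_iff₀ hYpos hDpos]
    calc ((m + 1).factorial : ℝ) ^ α * (((m + 1).factorial : ℝ) ^ β + r ^ 2) ^ (μ + 1)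
        ≤ ((m + 1).factorial : ℝ) ^ α *
            ((2:ℝ) ^ (μ + 1) * (((m + 1).factorial : ℝ) ^ β) ^ (μ + 1)) :=
          mul_le_mul_of_nonneg_left hden hXpos
      _ = (2:ℝ) ^ (μ + 1) * ((m + 1).factorial : ℝ) ^ α *
            (((m + 1).factorial : ℝ) ^ β) ^ (μ + 1) := by ring
  -- bound for L
  have hLbound : L ≤ (2:ℝ) ^ (μ + 1) * (4:ℝ) ^ α * (1 - q1)⁻¹ * (m:ℝ) ^ (-α) * A m := by
    have hterm : ∀ i ∈ Finset.range m,
        A i ≤ (2:ℝ) ^ (μ + 1) * (4:ℝ) ^ α * (m:ℝ) ^ (-α) * q1 ^ (m - i) * A m := by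
      intro i hi
      have him : i < m := Finset.mem_range.mp hi
      have h1 : A i ≤ (i.factorial : ℝ) ^ α / (r ^ 2) ^ (μ + 1) := by
        simp only [hA]
        gcongr
        exact le_add_of_nonneg_left (by positivity)
      have h2 := mf_left_term α hα i m him
      calc A i ≤ (i.factorial : ℝ) ^ α / (r ^ 2) ^ (μ + 1) := h1
        _ ≤ ((m.factorial : ℝ) ^ α * (m:ℝ) ^ (-α) * (4:ℝ) ^ α * q1 ^ (m - i)) /
              (r ^ 2) ^ (μ + 1) := by gcongr
        _ = ((m:ℝ) ^ (-α) * (4:ℝ) ^ α * q1 ^ (m - i)) *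
              ((m.factorial : ℝ) ^ α / (r ^ 2) ^ (μ + 1)) := by ring
        _ ≤ ((m:ℝ) ^ (-α) * (4:ℝ) ^ α * q1 ^ (m - i)) * ((2:ℝ) ^ (μ + 1) * A m) :=
            mul_le_mul_of_nonneg_left hAm_lb (by positivity)
        _ = (2:ℝ) ^ (μ + 1) * (4:ℝ) ^ α * (m:ℝ) ^ (-α) * q1 ^ (m - i) * A m := by ring
    calc L ≤ ∑ i ∈ Finset.range m,
            (2:ℝ) ^ (μ + 1) * (4:ℝ) ^ α * (m:ℝ) ^ (-α) * q1 ^ (m - i) * A m :=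
          Finset.sum_le_sum hterm
      _ = (2:ℝ) ^ (μ + 1) * (4:ℝ) ^ α * (m:ℝ) ^ (-α) * A m *
            ∑ i ∈ Finset.range m, q1 ^ (m - i) := by
          rw [Finset.mul_sum]
          exact Finset.sum_congr rfl fun i _ => by ring
      _ ≤ (2:ℝ) ^ (μ + 1) * (4:ℝ) ^ α * (m:ℝ) ^ (-α) * A m * (1 - q1)⁻¹ := by
          apply mul_le_mul_of_nonneg_left (mf_geom_tail q1 hq10.le hq11 m)
          exact mul_nonneg (by positivity) (hApos m).le
      _ = (2:ℝ) ^ (μ + 1) * (4:ℝ) ^ α * (1 - q1)⁻¹ * (m:ℝ) ^ (-α) * A m := by ring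
  -- bound for R
  have hq2inv : (0:ℝ) ≤ (1 - q2)⁻¹ := inv_nonneg.mpr (by linarith)
  have hq1inv : (0:ℝ) ≤ (1 - q1)⁻¹ := inv_nonneg.mpr (by linarith)
  have hRbound : R ≤ (2:ℝ) ^ (μ + 1) * (1 - q2)⁻¹ * ((m:ℝ) + 2) ^ (-δ) * A (m + 1) := by
    have hterm : ∀ k : ℕ, A (k + (m + 2)) ≤
        (((m + 1).factorial : ℝ)) ^ (-δ) * ((m:ℝ) + 2) ^ (-δ) * q2 ^ k := by
      intro k
      have h := mf_right_term δ hδ m k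
      rw [show m + 2 + k = k + (m + 2) by omega] at h
      exact le_trans (hAle _) h
    have hsum2 : Summable (fun k : ℕ =>
        (((m + 1).factorial : ℝ)) ^ (-δ) * ((m:ℝ) + 2) ^ (-δ) * q2 ^ k) := by
      simp only [mul_assoc]
      exact (summable_geometric_of_lt_one hq20.le hq21).mul_left _ |>.mul_left _
    have hsum1 : Summable (fun k : ℕ => A (k + (m + 2))) :=
      (summable_nat_add_iff (m + 2)).mpr hSumA
    calc R ≤ ∑' k : ℕ, (((m + 1).factorial : ℝ)) ^ (-δ) * ((m:ℝ) + 2) ^ (-δ) * q2 ^ k :=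
          Summable.tsum_le_tsum hterm hsum1 hsum2
      _ = (((m + 1).factorial : ℝ)) ^ (-δ) * ((m:ℝ) + 2) ^ (-δ) * (1 - q2)⁻¹ := by
          simp only [mul_assoc, tsum_mul_left]
          rw [tsum_geometric_of_lt_one hq20.le hq21]
      _ ≤ (2:ℝ) ^ (μ + 1) * A (m + 1) * ((m:ℝ) + 2) ^ (-δ) * (1 - q2)⁻¹ := by
          have hP : (0:ℝ) ≤ ((m:ℝ) + 2) ^ (-δ) := by positivity
          exact mul_le_mul_of_nonneg_right
            (mul_le_mul_of_nonneg_right hA1_lb hP) hq2inv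
      _ = (2:ℝ) ^ (μ + 1) * (1 - q2)⁻¹ * ((m:ℝ) + 2) ^ (-δ) * A (m + 1) := by ring
  constructor
  · show 1 ≤ (∑' n, A n) / (A m + A (m + 1))
    rw [one_le_div hD, hS]
    linarith
  · show (∑' n, A n) / (A m + A (m + 1)) ≤
      1 + (2:ℝ) ^ (μ + 1) * (4:ℝ) ^ α * (1 - q1)⁻¹ * (m:ℝ) ^ (-α)
        + (2:ℝ) ^ (μ + 1) * (1 - q2)⁻¹ * ((m:ℝ) + 2) ^ (-δ)
    rw [div_le_iff₀ hD, hS]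
    have hx1 : (0:ℝ) ≤ (2:ℝ) ^ (μ + 1) * (4:ℝ) ^ α * (1 - q1)⁻¹ * (m:ℝ) ^ (-α) * A (m + 1) :=
      mul_nonneg (mul_nonneg (mul_nonneg (mul_nonneg (by positivity) (by positivity))
        hq1inv) (by positivity)) (hApos (m + 1)).le
    have hx2 : (0:ℝ) ≤ (2:ℝ) ^ (μ + 1) * (1 - q2)⁻¹ * ((m:ℝ) + 2) ^ (-δ) * A m :=
      mul_nonneg (mul_nonneg (mul_nonneg (by positivity) hq2inv) (by positivity)) (hApos m).le
    nlinarith [hLbound, hRbound, hx1, hx2]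

/-- Lemma 4.1: the factorial Mathieu-type series is asymptotically dominated
by the two summands of indices `n₀(r)` and `n₀(r)+1`, where `n₀(r)` is the
unique nonnegative integer with `(n₀!)^β ≤ r² < ((n₀+1)!)^β`. -/
theorem mathieu_factorial_two_terms_dominate
    (α β μ : ℝ) (hα : 0 < α) (hβ : 0 < β) (hμ : 0 ≤ μ)
    (hconv : α - β * (μ + 1) < 0)
    (n₀ : ℝ → ℕ)
    (hn₀ : ∀ r : ℝ, 1 ≤ r →
      ((n₀ r).factorial : ℝ) ^ β ≤ r ^ 2 ∧
      r ^ 2 < (((n₀ r) + 1).factorial : ℝ) ^ β) :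
    Filter.Tendsto
      (fun r : ℝ =>
        (∑' n : ℕ,
          ((n.factorial : ℝ)) ^ α / (((n.factorial : ℝ)) ^ β + r ^ 2) ^ (μ + 1)) /
        ((((n₀ r).factorial : ℝ)) ^ α /
            (((((n₀ r).factorial : ℝ)) ^ β + r ^ 2) ^ (μ + 1)) +
         ((((n₀ r) + 1).factorial : ℝ)) ^ α /
            (((((n₀ r) + 1).factorial : ℝ)) ^ β + r ^ 2) ^ (μ + 1)))
      Filter.atTop (nhds 1) := by
  
  set δ : ℝ := β * (μ + 1) - α with hδdef
  have hδ : 0 < δ := by rw [hδdef]; linarith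
  -- n₀ tends to infinity
  have hn₀top : Tendsto n₀ atTop atTop := by
    rw [tendsto_atTop]
    intro N
    filter_upwards [eventually_ge_atTop (max 1 ((N.factorial : ℝ) ^ β))] with r hrr
    have hr1 : (1:ℝ) ≤ r := le_trans (le_max_left _ _) hrr
    obtain ⟨h1, h2⟩ := hn₀ r hr1
    by_contra hcon
    push_neg at hcon
    have hfle : (((n₀ r) + 1).factorial : ℝ) ≤ (N.factorial : ℝ) := by
      exact_mod_cast Nat.factorial_le (by omega)
    have h3 : (((n₀ r) + 1).factorial : ℝ) ^ β ≤ (N.factorial : ℝ) ^ β :=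
      rpow_le_rpow (by positivity) hfle hβ.le
    have hNr : (N.factorial : ℝ) ^ β ≤ r := le_trans (le_max_right _ _) hrr
    nlinarith
  have hcast : Tendsto (fun r : ℝ => ((n₀ r : ℕ) : ℝ)) atTop atTop :=
    tendsto_natCast_atTop_atTop.comp hn₀top
  -- the squeeze upper function
  have hg : Tendsto (fun r : ℝ =>
      1 + (2:ℝ) ^ (μ + 1) * (4:ℝ) ^ α * (1 - (2:ℝ) ^ (-α))⁻¹ * ((n₀ r : ℝ)) ^ (-α)
        + (2:ℝ) ^ (μ + 1) * (1 - (2:ℝ) ^ (-δ))⁻¹ * (((n₀ r : ℝ)) + 2) ^ (-δ))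
      atTop (nhds 1) := by
    have h1 : Tendsto (fun r : ℝ => ((n₀ r : ℝ)) ^ (-α)) atTop (nhds 0) :=
      (tendsto_rpow_neg_atTop hα).comp hcast
    have h2' : Tendsto (fun r : ℝ => ((n₀ r : ℝ)) + 2) atTop atTop :=
      tendsto_atTop_add_const_right _ 2 hcast
    have h2 : Tendsto (fun r : ℝ => (((n₀ r : ℝ)) + 2) ^ (-δ)) atTop (nhds 0) :=
      (tendsto_rpow_neg_atTop hδ).comp h2'
    have h3 := (tendsto_const_nhds (x := (1:ℝ)) (f := atTop)).add
      ((h1.const_mul ((2:ℝ) ^ (μ + 1) * (4:ℝ) ^ α * (1 - (2:ℝ) ^ (-α))⁻¹)).add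
        (h2.const_mul ((2:ℝ) ^ (μ + 1) * (1 - (2:ℝ) ^ (-δ))⁻¹)))
    simp only [mul_zero, add_zero] at h3
    convert h3 using 2 with r
    ring
  have hbound : ∀ᶠ r : ℝ in atTop,
      1 ≤ (∑' n : ℕ,
            ((n.factorial : ℝ)) ^ α / (((n.factorial : ℝ)) ^ β + r ^ 2) ^ (μ + 1)) /
          ((((n₀ r).factorial : ℝ)) ^ α /
              (((((n₀ r).factorial : ℝ)) ^ β + r ^ 2) ^ (μ + 1)) +
           ((((n₀ r) + 1).factorial : ℝ)) ^ α /
              (((((n₀ r) + 1).factorial : ℝ)) ^ β + r ^ 2) ^ (μ + 1)) ∧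
      (∑' n : ℕ,
            ((n.factorial : ℝ)) ^ α / (((n.factorial : ℝ)) ^ β + r ^ 2) ^ (μ + 1)) /
          ((((n₀ r).factorial : ℝ)) ^ α /
              (((((n₀ r).factorial : ℝ)) ^ β + r ^ 2) ^ (μ + 1)) +
           ((((n₀ r) + 1).factorial : ℝ)) ^ α /
              (((((n₀ r) + 1).factorial : ℝ)) ^ β + r ^ 2) ^ (μ + 1)) ≤
        1 + (2:ℝ) ^ (μ + 1) * (4:ℝ) ^ α * (1 - (2:ℝ) ^ (-α))⁻¹ * ((n₀ r : ℝ)) ^ (-α)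
          + (2:ℝ) ^ (μ + 1) * (1 - (2:ℝ) ^ (-δ))⁻¹ * (((n₀ r : ℝ)) + 2) ^ (-δ) := by
    filter_upwards [eventually_ge_atTop (1:ℝ)] with r hr
    obtain ⟨h1, h2⟩ := hn₀ r hr
    exact mf_main_bound α β μ δ r hα hβ hμ hδ hδdef hr (n₀ r) h1 h2
  exact tendsto_of_tendsto_of_tendsto_of_le_of_le' tendsto_const_nhds hg
    (hbound.mono fun r h => h.1) (hbound.mono fun r h => h.2)
end

section
/- Let β > 0 and let g : (0, ∞) → ℝ be any function such that for all sufficiently large r, g(r) ≥ 2 and Γ(g(r)) = r^{2/β}. Then g(r) · β · log log r / (2 · log r) → 1 as r → ∞. -/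
/-!
Since `Γ` increases on `[2, ∞)` and `Γ (n + 1) = n!`, the elementary bounds
`n log n - n ≤ log n! ≤ n log n` give `log Γ(x) = x log x + O(x)`. Hence `g r → ∞`, and with
`T = log Γ(g r) = (2/β) log r` one has `log T ~ log (g r)`, so `g r · log T / T → 1`; finally
`log log r` differs from `log T` by the constant `log (2/β)`.
-/

open Filter Real Asymptotics Topology
open scoped Nat

namespace Real

lemma log_factorial_le_mul_log (n : ℕ) : log (n ! : ℝ) ≤ n * log n := by
  rw [← log_pow]
  exact log_le_log (by positivity) (by exact_mod_cast Nat.factorial_le_pow n)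

lemma mul_log_sub_le_log_factorial (n : ℕ) : n * log n - n ≤ log (n ! : ℝ) := by
  rcases eq_or_ne n 0 with rfl | hn
  · simp
  have hstirling := Stirling.le_log_factorial_stirling hn
  have hlog_n : 0 ≤ log n := log_natCast_nonneg n
  have hlog_two_pi : 0 ≤ log (2 * π) := log_nonneg (by linarith [pi_gt_three])
  linarith

lemma log_Gamma_le_mul_log {x : ℝ} (hx : 2 ≤ x) : log (Gamma x) ≤ x * log x := by
  set n := ⌊x⌋₊
  have hn : (n : ℝ) ≤ x := Nat.floor_le (by linarith)
  have hn2 : (2 : ℝ) ≤ n := by exact_mod_cast Nat.le_floor (by exact_mod_cast hx)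
  have hΓ : Gamma x ≤ n ! := by
    rw [← Gamma_nat_eq_factorial]
    exact Gamma_strictMonoOn_Ici.monotoneOn hx (by simp; linarith) (Nat.lt_floor_add_one x).le
  calc log (Gamma x) ≤ log (n ! : ℝ) := log_le_log (Gamma_pos_of_pos (by linarith)) hΓ
    _ ≤ n * log n := log_factorial_le_mul_log n
    _ ≤ x * log x := by gcongr

lemma mul_log_sub_le_log_Gamma {x : ℝ} (hx : 4 ≤ x) : x * log x - 4 * x ≤ log (Gamma x) := by
  obtain ⟨m, hm⟩ : ∃ m : ℕ, ⌊x⌋₊ = m + 1 :=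
    Nat.exists_eq_add_of_le' (Nat.le_floor (by norm_num; linarith))
  have hm_le : (m : ℝ) + 1 ≤ x := by exact_mod_cast hm ▸ Nat.floor_le (by linarith)
  have hm_gt : x < (m : ℝ) + 2 := by
    have := Nat.lt_floor_add_one x
    rw [hm] at this; push_cast at this; linarith
  have hΓ : (m ! : ℝ) ≤ Gamma x := by
    rw [← Gamma_nat_eq_factorial]
    exact Gamma_strictMonoOn_Ici.monotoneOn (by simp; linarith) (by simp; linarith) hm_le
  have hlog_m : log x - log 2 ≤ log m := by
    rw [← log_div (by linarith) two_ne_zero]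
    exact log_le_log (by linarith) (by linarith)
  have hlog2 : log 2 < 1 := by linarith [log_two_lt_d9]
  have hlog_x : log x ≤ x := (log_le_sub_one_of_pos (by linarith)).trans (by linarith)
  have hlog2_x : log 2 ≤ log x := log_le_log two_pos (by linarith)
  calc x * log x - 4 * x ≤ (x - 2) * (log x - log 2) - x := by nlinarith
    _ ≤ m * log m - m := by gcongr <;> linarith
    _ ≤ log (m ! : ℝ) := mul_log_sub_le_log_factorial m
    _ ≤ log (Gamma x) := log_le_log (by positivity) hΓ

theorem isEquivalent_log_Gamma :
    (fun x => log (Gamma x)) ~[atTop] fun x => x * log x := by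
  have hdiff : (fun x => log (Gamma x) - x * log x) =O[atTop] fun x => x := by
    refine IsBigO.of_bound 4 ?_
    filter_upwards [eventually_ge_atTop 4] with x hx
    rw [norm_of_nonneg (by linarith : (0 : ℝ) ≤ x), norm_eq_abs, abs_le]
    constructor <;> linarith [log_Gamma_le_mul_log (by linarith : (2 : ℝ) ≤ x),
      mul_log_sub_le_log_Gamma hx]
  refine hdiff.trans_isLittleO ?_
  simpa using (isBigO_refl (fun x : ℝ => x) atTop).mul_isLittleO
    (isLittleO_const_log_atTop (c := 1))

theorem tendsto_atTop_of_tendsto_Gamma {α : Type*} {l : Filter α} {u : α → ℝ}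
    (hu : ∀ᶠ a in l, 2 ≤ u a) (hΓ : Tendsto (fun a => Gamma (u a)) l atTop) :
    Tendsto u l atTop := by
  refine tendsto_atTop.2 fun b => ?_
  filter_upwards [hu, hΓ.eventually_gt_atTop (Gamma (max b 2))] with a h2 hlt
  exact (le_max_left b 2).trans
    ((Gamma_strictMonoOn_Ici.lt_iff_lt (le_max_right b 2) h2).1 hlt).le

end Real

theorem tendsto_mul_log_add_div_of_isEquivalent {f : ℝ → ℝ}
    (hf : f ~[atTop] fun x => x * log x) (c : ℝ) :
    Tendsto (fun x => x * (log (f x) + c) / f x) atTop (𝓝 1) := by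
  have hxlog : Tendsto (fun x => x * log x) atTop atTop :=
    tendsto_id.atTop_mul_atTop₀ tendsto_log_atTop
  have hlog_mul : (fun x => log (x * log x)) ~[atTop] log := by
    refine (isLittleO_log_id_atTop.comp_tendsto tendsto_log_atTop |>.add_isEquivalent
      IsEquivalent.refl).congr_left ?_
    filter_upwards [eventually_gt_atTop 1] with x hx
    simp [log_mul (by linarith : x ≠ 0) (log_pos hx).ne', add_comm]
  have hlog_f : (fun x => log (f x) + c) ~[atTop] log :=
    ((hf.log hxlog).trans hlog_mul).add_isLittleO isLittleO_const_log_atTop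
  have hf_top : Tendsto f atTop atTop := hf.symm.tendsto_atTop hxlog
  have hequiv := (IsEquivalent.refl.mul hlog_f).trans hf.symm
  exact (isEquivalent_iff_tendsto_one (hf_top.eventually_ne_atTop 0)).1 hequiv

/-- Equation (1.9): the inverse Gamma function of `r^{2/β}` grows like
`2 log r / (β log log r)` as `r → ∞`. -/
theorem inverse_gamma_asymptotics
    (β : ℝ) (hβ : 0 < β) (g : ℝ → ℝ)
    (hg : ∀ᶠ r in Filter.atTop, 2 ≤ g r ∧ Real.Gamma (g r) = r ^ (2 / β)) :
    Filter.Tendsto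
      (fun r : ℝ => g r * β * Real.log (Real.log r) / (2 * Real.log r))
      Filter.atTop (nhds 1) := by
  have hΓ_top : Tendsto (fun r => Gamma (g r)) atTop atTop :=
    (tendsto_rpow_atTop (by positivity)).congr' (hg.mono fun r hr => hr.2.symm)
  have hg_top : Tendsto g atTop atTop :=
    tendsto_atTop_of_tendsto_Gamma (hg.mono fun r hr => hr.1) hΓ_top
  refine ((tendsto_mul_log_add_div_of_isEquivalent isEquivalent_log_Gamma
    (-log (2 / β))).comp hg_top).congr' ?_
  filter_upwards [hg, eventually_gt_atTop 1] with r ⟨_, hΓ⟩ hr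
  have hlog_r : 0 < log r := log_pos hr
  have hlog_Γ : log (Gamma (g r)) = 2 / β * log r := by rw [hΓ, log_rpow (by linarith)]
  rw [Function.comp_apply, hlog_Γ, log_mul (by positivity) hlog_r.ne']
  field_simp
  ring
end

section
/- Let x ∈ ℂ with |x| < 1, let (a_n)_{n≥0} be complex numbers such that Σ_{n=0}^∞ |a_n|·|x|^n < ∞, let (b_n)_{n≥0} be nonnegative reals with b_n → ∞, and let μ ≥ 0. Then r^{2(μ+1)} · Σ_{n=0}^∞ a_n·x^n / (b_n + r²)^{μ+1} → Σ_{n=0}^∞ a_n·x^n as r → ∞. -/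
/-!
Moving `r^{2(μ+1)}` inside the sum turns the `n`-th term into
`aₙ xⁿ (r² / (bₙ + r²))^{μ+1}`. For `bₙ ≥ 0` and `μ ≥ 0` the damping factor lies in
`[0, 1]` and tends to `1` as `r → ∞`, so dominated convergence for series (Tannery's
theorem), with the summable majorant `|aₙ| |x|ⁿ`, gives the limit.
-/

open Filter Complex

open scoped Topology

theorem tendsto_div_const_add_atTop (c : ℝ) :
    Tendsto (fun t : ℝ => t / (c + t)) atTop (𝓝 1) := by
  have hden : Tendsto (fun t : ℝ => c + t) atTop atTop :=
    tendsto_atTop_add_const_left _ _ tendsto_id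
  have hlim : Tendsto (fun t : ℝ => 1 - c / (c + t)) atTop (𝓝 (1 - 0)) :=
    tendsto_const_nhds.sub (tendsto_const_nhds.div_atTop hden)
  rw [sub_zero] at hlim
  refine hlim.congr' ?_
  filter_upwards [hden.eventually_gt_atTop 0] with t ht
  field_simp
  ring

theorem tendsto_sq_div_const_add_sq_rpow (c p : ℝ) :
    Tendsto (fun r : ℝ => (r ^ 2 / (c + r ^ 2)) ^ p) atTop (𝓝 1) := by
  have hbase := (tendsto_div_const_add_atTop c).comp (tendsto_pow_atTop (two_ne_zero (α := ℕ)))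
  simpa only [Real.one_rpow, Function.comp_def] using
    (Real.continuousAt_rpow_const 1 p (Or.inl one_ne_zero)).tendsto.comp hbase

theorem div_const_add_rpow_le_one {c t p : ℝ} (hc : 0 ≤ c) (ht : 0 ≤ t) (hp : 0 ≤ p) :
    (t / (c + t)) ^ p ≤ 1 :=
  Real.rpow_le_one (by positivity) (div_le_one_of_le₀ (by linarith) (by positivity)) hp

theorem sq_div_const_add_sq_rpow {c r p : ℝ} (hc : 0 ≤ c) (hr : 0 ≤ r) :
    (r ^ 2 / (c + r ^ 2)) ^ p = r ^ (2 * p) / (c + r ^ 2) ^ p := by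
  rw [Real.div_rpow (by positivity) (by positivity), Real.rpow_mul hr, Real.rpow_two]

theorem tendsto_tsum_mul_of_tendsto_one {α ι R : Type*} [NormedRing R] [CompleteSpace R]
    {l : Filter α} {f : ι → R} (hf : Summable (‖f ·‖)) {g : α → ι → R}
    (hg : ∀ i, Tendsto (g · i) l (𝓝 1)) (hg_le : ∀ᶠ r in l, ∀ i, ‖g r i‖ ≤ 1) :
    Tendsto (fun r => ∑' i, f i * g r i) l (𝓝 (∑' i, f i)) := by
  refine tendsto_tsum_of_dominated_convergence hf (fun i => ?_) ?_
  · simpa only [mul_one] using (hg i).const_mul (f i)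
  · filter_upwards [hg_le] with r hr i
    calc ‖f i * g r i‖ ≤ ‖f i‖ * ‖g r i‖ := norm_mul_le _ _
      _ ≤ ‖f i‖ * 1 := by gcongr; exact hr i
      _ = ‖f i‖ := mul_one _

theorem mathieu_power_series_asymptotics_general
    (x : ℂ)
    (a : ℕ → ℂ)
    (ha : Summable (fun n : ℕ => ‖a n‖ * ‖x‖ ^ n))
    (b : ℕ → ℝ) (hb_nonneg : ∀ n, 0 ≤ b n)
    (μ : ℝ) (hμ : 0 ≤ μ) :
    Filter.Tendsto
      (fun r : ℝ =>
        ((r ^ (2 * (μ + 1)) : ℝ) : ℂ) *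
          ∑' n : ℕ, a n * x ^ n / (((b n + r ^ 2) ^ (μ + 1) : ℝ) : ℂ))
      Filter.atTop (nhds (∑' n : ℕ, a n * x ^ n)) := by
  have hsum : Summable (fun n => ‖a n * x ^ n‖) := by simpa only [norm_mul, norm_pow] using ha
  have hlim := tendsto_tsum_mul_of_tendsto_one hsum
    (g := fun r n => (((r ^ 2 / (b n + r ^ 2)) ^ (μ + 1) : ℝ) : ℂ))
    (fun n => by
      simpa only [ofReal_one, Function.comp_def] using
        (continuous_ofReal.tendsto 1).comp (tendsto_sq_div_const_add_sq_rpow (b n) (μ + 1)))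
    (by
      filter_upwards [eventually_ge_atTop 0] with r hr n
      have hbn := hb_nonneg n
      rw [norm_real, Real.norm_of_nonneg (by positivity)]
      exact div_const_add_rpow_le_one hbn (by positivity) (by linarith))
  refine hlim.congr' ?_
  filter_upwards [eventually_ge_atTop 0] with r hr
  rw [← tsum_mul_left]
  congr 1 with n
  rw [sq_div_const_add_sq_rpow (hb_nonneg n) hr, ofReal_div]
  ring

/-- Proposition 6.2: asymptotics of Mathieu-type power series.  For `|x| < 1`,
absolutely convergent `∑ aₙ xⁿ` and `bₙ → ∞`,
`r^{2(μ+1)} ∑_{n=0}^∞ aₙ xⁿ / (bₙ + r²)^{μ+1} → ∑_{n=0}^∞ aₙ xⁿ` as `r → ∞`. -/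
theorem mathieu_power_series_asymptotics
    (x : ℂ) (hx : ‖x‖ < 1)
    (a : ℕ → ℂ)
    (ha : Summable (fun n : ℕ => ‖a n‖ * ‖x‖ ^ n))
    (b : ℕ → ℝ) (hb_nonneg : ∀ n, 0 ≤ b n)
    (hb : Filter.Tendsto b Filter.atTop Filter.atTop)
    (μ : ℝ) (hμ : 0 ≤ μ) :
    Filter.Tendsto
      (fun r : ℝ =>
        ((r ^ (2 * (μ + 1)) : ℝ) : ℂ) *
          ∑' n : ℕ, a n * x ^ n / (((b n + r ^ 2) ^ (μ + 1) : ℝ) : ℂ))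
      Filter.atTop (nhds (∑' n : ℕ, a n * x ^ n)) :=
  mathieu_power_series_asymptotics_general x a ha b hb_nonneg μ hμ
end
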